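/- arXiv:2108.07434 — 7 statements merged into one kernel-verified Lean document; each statement's English description precedes it below -/
import Mathlib

section
/- Let L > 0, let v : ℝ^N → ℝ^N be Lipschitz with constant L, and let γ : ℝ → ℝ^N be a differentiable curve satisfying γ'(t) = v(γ(t)) for all t. If γ is periodic with period T > 0 (i.e., γ(t + T) = γ(t) for all t) and γ is not constant, then T ≥ 2π/L. -/
/-!
Suppose `γ` has period `T` with `L T < 2π`. Then `y t = γ (t + T/2) - γ t` satisfies
`‖y'‖ ≤ L ‖y‖` and `y (t + T/2) = -y t`. By uniqueness for the ODE, either `y` vanishes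
somewhere, and then `T/2` is a period, or it never vanishes. In the latter case the direction of
`y` turns with angular speed at most `L` (compare `⟪y a, y t⟫` with `‖y a‖ ‖y t‖ cos α(t)` for an
angle `α` growing faster than `L`), so reaching the opposite direction takes time at least
`π / L > T/2`, which is absurd. Hence all of `T/2, T/4, …` are periods, and a continuous function
with arbitrarily small periods is constant.
-/

open Real Set Function InnerProductGeometry
open scoped RealInnerProductSpace

theorem periodic_of_apply_add_eq {E : Type*} [NormedAddCommGroup E] [NormedSpace ℝ E]
    {v : E → E} {K : NNReal} {γ : ℝ → E} (hv : LipschitzWith K v)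
    (hγ : ∀ t, HasDerivAt γ (v (γ t)) t) {t₀ P : ℝ} (h : γ (t₀ + P) = γ t₀) : Periodic γ P :=
  congrFun (ODE_solution_unique_univ (v := fun _ => v) (s := fun _ => univ)
    (fun _ => hv.lipschitzOnWith) (fun t => ⟨(hγ (t + P)).comp_add_const t P, trivial⟩)
    (fun t => ⟨hγ t, trivial⟩) h)

section Angle

variable {E : Type*} [NormedAddCommGroup E] [InnerProductSpace ℝ E]

theorem HasDerivAt.norm {y : ℝ → E} {y' : E} {t : ℝ} (hy : HasDerivAt y y' t) (h : y t ≠ 0) :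
    HasDerivAt (fun s => ‖y s‖) (⟪y t, y'⟫ / ‖y t‖) t := by
  have hpos : 0 < ‖y t‖ := norm_pos_iff.2 h
  have := (hasDerivAt_sqrt (pow_pos hpos 2).ne').comp t hy.norm_sq
  simp only [comp_def, sqrt_sq (norm_nonneg _)] at this
  refine this.congr_deriv ?_
  field_simp

theorem norm_sub_smul_eq_mul_sin {x w : E} (hx : x ≠ 0) {θ : ℝ}
    (h : ⟪w, x⟫ = ‖w‖ * ‖x‖ * cos θ) (hθ : 0 ≤ sin θ) :
    ‖w - (‖w‖ * cos θ / ‖x‖) • x‖ = ‖w‖ * sin θ := by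
  have hx' : 0 < ‖x‖ := norm_pos_iff.2 hx
  refine (sq_eq_sq₀ (norm_nonneg _) (by positivity)).1 ?_
  rw [norm_sub_sq_real, real_inner_smul_right, h, norm_smul, Real.norm_eq_abs, mul_pow, sq_abs]
  field_simp
  nlinarith [sin_sq_add_cos_sq θ]

theorem abs_inner_sub_le_mul_sin {x x' w : E} (hx : x ≠ 0) {θ : ℝ}
    (h : ⟪w, x⟫ = ‖w‖ * ‖x‖ * cos θ) (hθ : 0 ≤ sin θ) :
    |⟪w, x'⟫ - ‖w‖ * cos θ / ‖x‖ * ⟪x, x'⟫| ≤ ‖w‖ * sin θ * ‖x'‖ := by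
  rw [← real_inner_smul_left, ← inner_sub_left, ← norm_sub_smul_eq_mul_sin hx h hθ]
  exact abs_real_inner_le_norm _ _

variable {y y' : ℝ → E} {L : ℝ}

theorem angle_le_of_norm_deriv_le (hy : ∀ t, HasDerivAt y (y' t) t)
    (hbound : ∀ t, ‖y' t‖ ≤ L * ‖y t‖) (hne : ∀ t, y t ≠ 0) {α α' : ℝ → ℝ}
    (hα : ∀ t, HasDerivAt α (α' t) t) (hLα : ∀ t, L < α' t) {a b : ℝ}
    (hα_mem : ∀ t ∈ Icc a b, α t ∈ Ioo 0 π) :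
    ∀ t ∈ Icc a b, angle (y a) (y t) ≤ α t := by
  set w := y a
  have hw : 0 < ‖w‖ := norm_pos_iff.2 (hne a)
  have hf : ∀ t, HasDerivAt (fun s => ‖w‖ * (‖y s‖ * cos (α s)))
      (‖w‖ * (⟪y t, y' t⟫ / ‖y t‖ * cos (α t) + ‖y t‖ * (-sin (α t) * α' t))) t :=
    fun t => (((hy t).norm (hne t)).mul (hα t).cos).const_mul _
  have hB : ∀ t, HasDerivAt (fun s => ⟪w, y s⟫) ⟪w, y' t⟫ t := fun t => by
    simpa using (hasDerivAt_const t w).inner ℝ (hy t)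
  have hcos_le : ∀ t ∈ Icc a b, ‖w‖ * (‖y t‖ * cos (α t)) ≤ ⟪w, y t⟫ := by
    refine image_le_of_deriv_right_lt_deriv_boundary
      (fun t _ => (hf t).continuousAt.continuousWithinAt) (fun t _ => (hf t).hasDerivWithinAt)
      ?_ hB fun t ht htouch => ?_
    · rw [real_inner_self_eq_norm_sq]
      nlinarith [cos_le_one (α a)]
    · have hsin : 0 < sin (α t) := sin_pos_of_pos_of_lt_pi (hα_mem t (Ico_subset_Icc_self ht)).1
        (hα_mem t (Ico_subset_Icc_self ht)).2
      have hyt : 0 < ‖y t‖ := norm_pos_iff.2 (hne t)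
      have hperp := abs_inner_sub_le_mul_sin (x' := y' t) (hne t) (by linarith) hsin.le
      have hspeed : ‖y' t‖ < α' t * ‖y t‖ :=
        (hbound t).trans_lt (mul_lt_mul_of_pos_right (hLα t) hyt)
      have hturn := mul_lt_mul_of_pos_left hspeed (mul_pos hw hsin)
      have hrearrange : ‖w‖ * (⟪y t, y' t⟫ / ‖y t‖ * cos (α t)) =
          ‖w‖ * cos (α t) / ‖y t‖ * ⟪y t, y' t⟫ := by
        ring
      nlinarith [abs_le.1 hperp]
  intro t ht
  by_contra! hlt
  have hyt : 0 < ‖y t‖ := norm_pos_iff.2 (hne t)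
  have hcos_lt := cos_lt_cos_of_nonneg_of_le_pi (hα_mem t ht).1.le (angle_le_pi _ _) hlt
  have hcos_le_t := hcos_le t ht
  rw [← cos_angle_mul_norm_mul_norm] at hcos_le_t
  nlinarith [mul_pos hw hyt]

theorem pi_le_mul_of_apply_add_eq_neg (hy : ∀ t, HasDerivAt y (y' t) t)
    (hbound : ∀ t, ‖y' t‖ ≤ L * ‖y t‖) (hne : ∀ t, y t ≠ 0) {a P : ℝ} (hP : 0 < P)
    (hneg : y (a + P) = -y a) : π ≤ L * P := by
  by_contra! hLP
  have hL : 0 ≤ L := nonneg_of_mul_nonneg_left ((norm_nonneg _).trans (hbound a))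
    (norm_pos_iff.2 (hne a))
  obtain ⟨c, hLc, hcP⟩ : ∃ c, L < c ∧ c * P < π :=
    ⟨(L + π / P) / 2, by linarith [(lt_div_iff₀ hP).2 hLP], by
      rw [div_mul_eq_mul_div, add_mul, div_mul_cancel₀ _ hP.ne']; linarith⟩
  -- The comparison angle starts at `(π - c P) / 2 > 0` rather than at `0`: the fencing argument
  -- needs `sin > 0` at every touching point, `t = a` included.
  have hα_mem : ∀ t ∈ Icc a (a + P), (π - c * P) / 2 + c * (t - a) ∈ Ioo 0 π := fun t ht =>
    ⟨by nlinarith [ht.1], by nlinarith [ht.2]⟩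
  have hangle := angle_le_of_norm_deriv_le hy hbound hne
    (fun t => (((hasDerivAt_id' t).sub_const a).const_mul c).const_add ((π - c * P) / 2))
    (fun _ => by simpa using hLc) hα_mem (a + P) ⟨by linarith, le_rfl⟩
  rw [hneg, angle_self_neg_of_nonzero (hne a), add_sub_cancel_left] at hangle
  linarith

end Angle

section Periods

variable {E : Type*} [NormedAddCommGroup E] [InnerProductSpace ℝ E]
  {v : E → E} {K : NNReal} {γ : ℝ → E}

theorem Function.Periodic.half_of_mul_lt (hv : LipschitzWith K v)
    (hγ : ∀ t, HasDerivAt γ (v (γ t)) t) {T : ℝ} (hper : Periodic γ T) (hT : 0 < T)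
    (hKT : K * T < 2 * π) : Periodic γ (T / 2) := by
  by_cases hret : ∃ t, γ (t + T / 2) = γ t
  · obtain ⟨t₀, ht₀⟩ := hret
    exact periodic_of_apply_add_eq hv hγ ht₀
  push Not at hret
  have hneg : γ (0 + T / 2 + T / 2) - γ (0 + T / 2) = -(γ (0 + T / 2) - γ 0) := by
    rw [add_assoc, add_halves, hper, zero_add, neg_sub]
  have := pi_le_mul_of_apply_add_eq_neg (y := fun t => γ (t + T / 2) - γ t)
    (fun t => ((hγ (t + T / 2)).comp_add_const t (T / 2)).sub (hγ t))
    (fun t => hv.norm_sub_le _ _) (fun t => sub_ne_zero.2 (hret t)) (half_pos hT) hneg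
  linarith

theorem Function.Periodic.div_two_pow_of_mul_lt (hv : LipschitzWith K v)
    (hγ : ∀ t, HasDerivAt γ (v (γ t)) t) {T : ℝ} (hper : Periodic γ T) (hT : 0 < T)
    (hKT : K * T < 2 * π) (n : ℕ) : Periodic γ (T / 2 ^ n) := by
  induction n with
  | zero => simpa using hper
  | succ n ih =>
    rw [pow_succ, ← div_div]
    refine ih.half_of_mul_lt hv hγ (by positivity) (lt_of_le_of_lt ?_ hKT)
    exact mul_le_mul_of_nonneg_left (div_le_self hT.le (one_le_pow₀ one_le_two)) K.2

end Periods

theorem Continuous.apply_eq_of_forall_exists_periodic {G X : Type*} [AddCommGroup G]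
    [LinearOrder G] [IsOrderedAddMonoid G] [Archimedean G] [TopologicalSpace G] [OrderTopology G]
    [TopologicalSpace X] [T2Space X] {f : G → X} (hf : Continuous f)
    (hsmall : ∀ ε > 0, ∃ p ∈ Ioo 0 ε, Periodic f p) (x y : G) : f x = f y := by
  let periods : AddSubgroup G :=
    { carrier := {p | Periodic f p}
      zero_mem' := periodic_with_period_zero f
      add_mem' := Periodic.add_period
      neg_mem' := Periodic.neg }
  have hclosed : IsClosed (periods : Set G) := by
    change IsClosed {p | ∀ t, f (t + p) = f t}
    rw [ofPred_forall]
    exact isClosed_iInter fun t =>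
      isClosed_eq (hf.comp (continuous_const.add continuous_id)) continuous_const
  have hdense : Dense (periods : Set G) :=
    periods.dense_of_not_isolated_zero fun ε hε =>
      (hsmall ε hε).imp fun _ ⟨hp, hper⟩ => ⟨hper, hp⟩
  have hall : Periodic f (x - y) := hclosed.closure_subset (hdense (x - y))
  simpa using hall y

theorem yorke_period_bound_general {N : ℕ} (L : ℝ)
    (v : EuclideanSpace ℝ (Fin N) → EuclideanSpace ℝ (Fin N))
    (hv : ∀ x y, ‖v x - v y‖ ≤ L * ‖x - y‖)
    (γ : ℝ → EuclideanSpace ℝ (Fin N))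
    (hγ : ∀ t, HasDerivAt γ (v (γ t)) t)
    (T : ℝ) (hT : 0 < T)
    (hper : ∀ t, γ (t + T) = γ t)
    (hnonconst : ¬ (∀ s t, γ s = γ t)) :
    2 * Real.pi / L ≤ T := by
  by_contra! hTL
  have hL : 0 < L := (div_pos_iff_of_pos_left two_pi_pos).1 (hT.trans hTL)
  have hv' : LipschitzWith L.toNNReal v := .of_dist_le' (by simpa only [dist_eq_norm] using hv)
  have hLT : (L.toNNReal : ℝ) * T < 2 * π := by
    rw [Real.coe_toNNReal _ hL.le, mul_comm]
    exact (lt_div_iff₀ hL).1 hTL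
  refine hnonconst (Continuous.apply_eq_of_forall_exists_periodic ?_ fun ε hε => ?_)
  · exact continuous_iff_continuousAt.2 fun t => (hγ t).continuousAt
  obtain ⟨n, hn⟩ := exists_pow_lt_of_lt_one (div_pos hε hT) one_half_lt_one
  refine ⟨T / 2 ^ n, ⟨by positivity, ?_⟩, Periodic.div_two_pow_of_mul_lt hv' hγ hper hT hLT n⟩
  calc T / 2 ^ n = T * (1 / 2) ^ n := by rw [one_div_pow, mul_one_div]
    _ < T * (ε / T) := mul_lt_mul_of_pos_left hn hT
    _ = ε := mul_div_cancel₀ ε hT.ne'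

/-- **Yorke's period bound.**  A nonconstant periodic orbit of a vector field
that is Lipschitz with constant `L` has period at least `2π/L`. -/
theorem yorke_period_bound {N : ℕ} (L : ℝ) (hL : 0 < L)
    (v : EuclideanSpace ℝ (Fin N) → EuclideanSpace ℝ (Fin N))
    (hv : ∀ x y, ‖v x - v y‖ ≤ L * ‖x - y‖)
    (γ : ℝ → EuclideanSpace ℝ (Fin N))
    (hγ : ∀ t, HasDerivAt γ (v (γ t)) t)
    (T : ℝ) (hT : 0 < T)
    (hper : ∀ t, γ (t + T) = γ t)
    (hnonconst : ¬ (∀ s t, γ s = γ t)) :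
    2 * Real.pi / L ≤ T :=
  yorke_period_bound_general L v hv γ hγ T hT hper hnonconst
end

section
/- Let L > 0, let v : ℝ^N → ℝ^N be Lipschitz with constant L, and let Φ : ℝ × ℝ^N → ℝ^N be its global flow (Φ(0,x) = x and ∂Φ/∂t(t,x) = v(Φ(t,x)) for all t, x). Then for every τ with 0 < τ < 2π/L and every x ∈ ℝ^N, one has Φ(τ, x) = x if and only if v(x) = 0. -/
/-!
Yorke's argument. Suppose the trajectory `f(t) = Φ(t, x)` returns to `x` at time `τ`. Then the
velocity `g = v ∘ f = f'` has mean zero on `[0, τ]`, and so has `u = f - (mean of f)`, which is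
`τ`-periodic with derivative `g`. Wirtinger's inequality (Parseval on `[0, τ]`, using
`ĝ n = (2πin/τ) û n`) gives `‖u‖₂ ≤ τ/(2π) ‖g‖₂`. On the other hand, for a mean-zero function `h`
the integral of `‖h t - h s‖²` over `[0, τ]²` is `2τ ‖h‖₂²`, so integrating the Lipschitz bound
`‖g t - g s‖ ≤ L ‖u t - u s‖` gives `‖g‖₂ ≤ L ‖u‖₂` without ever differentiating `g`. Hence
`‖g‖₂ ≤ Lτ/(2π) ‖g‖₂`, and `Lτ < 2π` forces `g ≡ 0`, in particular `v x = g 0 = 0`.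
Conversely, if `v x = 0` the constant path is a solution, so uniqueness of solutions fixes `x`.
-/

open MeasureTheory Set Real
open scoped NNReal

variable {a b : ℝ}

theorem ContinuousOn.memLp_two_restrict_Ioc {F : Type*} [NormedAddCommGroup F] {f : ℝ → F}
    (hf : ContinuousOn f (Icc a b)) : MemLp f 2 (volume.restrict (Ioc a b)) :=
  (memLp_two_iff_integrable_sq_norm
    ((hf.mono Ioc_subset_Icc_self).aestronglyMeasurable measurableSet_Ioc)).2
    (((hf.norm.pow 2).integrableOn_Icc).mono_set Ioc_subset_Icc_self)

theorem fourierCoeffOn_deriv_of_periodic (hab : a < b) {f f' : ℝ → ℂ}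
    (hf : ∀ x ∈ Icc a b, HasDerivAt f (f' x) x) (hf' : IntervalIntegrable f' volume a b)
    (hper : f b = f a) {n : ℤ} (hn : n ≠ 0) :
    fourierCoeffOn hab f' n = 2 * π * Complex.I * n / (b - a) * fourierCoeffOn hab f n := by
  rw [← uIcc_of_le hab.le] at hf
  rw [fourierCoeffOn_of_hasDerivAt hab hn hf hf', hper, sub_self, mul_zero, zero_sub]
  have hba : (b - a : ℂ) ≠ 0 := by exact_mod_cast (sub_pos.2 hab).ne'
  have hn' : (n : ℂ) ≠ 0 := by exact_mod_cast hn
  field_simp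

theorem Complex.wirtinger_inequality (hab : a < b) {f f' : ℝ → ℂ}
    (hf : ∀ x ∈ Icc a b, HasDerivAt f (f' x) x) (hf' : ContinuousOn f' (Icc a b))
    (hper : f b = f a) (hmean : ∫ x in a..b, f x = 0) :
    ∫ x in a..b, ‖f x‖ ^ 2 ≤ ((b - a) / (2 * π)) ^ 2 * ∫ x in a..b, ‖f' x‖ ^ 2 := by
  have hfc : ContinuousOn f (Icc a b) := fun x hx => (hf x hx).continuousAt.continuousWithinAt
  have hba : 0 < b - a := sub_pos.2 hab
  have hcoeff (n : ℤ) :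
      (2 * π / (b - a)) ^ 2 * ‖fourierCoeffOn hab f n‖ ^ 2 ≤ ‖fourierCoeffOn hab f' n‖ ^ 2 := by
    rcases eq_or_ne n 0 with rfl | hn
    · rw [show fourierCoeffOn hab f 0 = 0 by simp [fourierCoeffOn_eq_integral, hmean],
        norm_zero, zero_pow two_ne_zero, mul_zero]
      positivity
    have hfactor : ‖2 * π * I * n / (b - a)‖ = 2 * π / (b - a) * |(n : ℝ)| := by
      rw [norm_div, ← ofReal_sub, norm_real, Real.norm_of_nonneg hba.le]
      simp [abs_of_pos pi_pos]
      ring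
    rw [fourierCoeffOn_deriv_of_periodic hab hf (hf'.intervalIntegrable_of_Icc hab.le) hper hn,
      norm_mul, hfactor, ← mul_pow]
    gcongr
    exact le_mul_of_one_le_right (by positivity) (by exact_mod_cast Int.one_le_abs hn)
  have hparseval := hasSum_le hcoeff
    ((hasSum_sq_fourierCoeffOn hab hfc.memLp_two_restrict_Ioc).mul_left _)
    (hasSum_sq_fourierCoeffOn hab hf'.memLp_two_restrict_Ioc)
  rw [smul_eq_mul, smul_eq_mul] at hparseval
  calc ∫ x in a..b, ‖f x‖ ^ 2
      = ((b - a) / (2 * π)) ^ 2 * (b - a) *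
          ((2 * π / (b - a)) ^ 2 * ((b - a)⁻¹ * ∫ x in a..b, ‖f x‖ ^ 2)) := by field_simp
    _ ≤ ((b - a) / (2 * π)) ^ 2 * (b - a) * ((b - a)⁻¹ * ∫ x in a..b, ‖f' x‖ ^ 2) := by gcongr
    _ = ((b - a) / (2 * π)) ^ 2 * ∫ x in a..b, ‖f' x‖ ^ 2 := by field_simp

theorem EuclideanSpace.wirtinger_inequality {ι : Type*} [Fintype ι] (hab : a < b)
    {f f' : ℝ → EuclideanSpace ℝ ι}
    (hf : ∀ x ∈ Icc a b, HasDerivAt f (f' x) x) (hf' : ContinuousOn f' (Icc a b))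
    (hper : f b = f a) (hmean : ∫ x in a..b, f x = 0) :
    ∫ x in a..b, ‖f x‖ ^ 2 ≤ ((b - a) / (2 * π)) ^ 2 * ∫ x in a..b, ‖f' x‖ ^ 2 := by
  have hfc : ContinuousOn f (Icc a b) := fun x hx => (hf x hx).continuousAt.continuousWithinAt
  have hcoord (j : ι) :
      ∫ x in a..b, ‖f x j‖ ^ 2 ≤ ((b - a) / (2 * π)) ^ 2 * ∫ x in a..b, ‖f' x j‖ ^ 2 := by
    let P : EuclideanSpace ℝ ι →L[ℝ] ℂ := Complex.ofRealCLM.comp (EuclideanSpace.proj j)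
    have hmeanP : ∫ x in a..b, P (f x) = 0 := by
      rw [P.intervalIntegral_comp_comm (hfc.intervalIntegrable_of_Icc hab.le), hmean, map_zero]
    simpa [P] using Complex.wirtinger_inequality hab
      (fun x hx => P.hasFDerivAt.comp_hasDerivAt x (hf x hx)) (P.continuous.comp_continuousOn hf')
      (by simp [hper]) hmeanP
  have hsplit {u : ℝ → EuclideanSpace ℝ ι} (hu : ContinuousOn u (Icc a b)) :
      ∫ x in a..b, ‖u x‖ ^ 2 = ∑ j, ∫ x in a..b, ‖u x j‖ ^ 2 := by
    simp_rw [EuclideanSpace.norm_sq_eq]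
    refine intervalIntegral.integral_finsetSum fun j _ => ?_
    exact (((EuclideanSpace.proj j).continuous.comp_continuousOn hu).norm.pow 2)
      |>.intervalIntegrable_of_Icc hab.le
  rw [hsplit hfc, hsplit hf', Finset.mul_sum]
  exact Finset.sum_le_sum fun j _ => hcoord j

section MeanZero

variable {E F : Type*} [NormedAddCommGroup E] [InnerProductSpace ℝ E] [CompleteSpace E]
  [NormedAddCommGroup F] [InnerProductSpace ℝ F] [CompleteSpace F]

theorem integral_norm_sub_sq_of_integral_eq_zero {u : ℝ → E} (hu : ContinuousOn u (uIcc a b))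
    (hmean : ∫ s in a..b, u s = 0) (t : ℝ) :
    ∫ s in a..b, ‖u t - u s‖ ^ 2 = (b - a) * ‖u t‖ ^ 2 + ∫ s in a..b, ‖u s‖ ^ 2 := by
  have hinner : ∫ s in a..b, 2 * inner ℝ (u t) (u s) = 0 := by
    rw [intervalIntegral.integral_const_mul]
    simpa [hmean] using
      (innerSL ℝ (u t)).intervalIntegral_comp_comm (hu.intervalIntegrable (μ := volume))
  simp_rw [norm_sub_sq_real]
  rw [intervalIntegral.integral_add, intervalIntegral.integral_sub, hinner,
    intervalIntegral.integral_const, smul_eq_mul, sub_zero]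
  all_goals exact ContinuousOn.intervalIntegrable (μ := volume) (by fun_prop)

theorem integral_norm_sq_le_of_norm_sub_le (hab : a < b) {u : ℝ → E} {w : ℝ → F} {K : ℝ}
    (hu : ContinuousOn u (Icc a b)) (hw : ContinuousOn w (Icc a b))
    (hu0 : ∫ s in a..b, u s = 0) (hw0 : ∫ s in a..b, w s = 0)
    (hwu : ∀ t ∈ Icc a b, ∀ s ∈ Icc a b, ‖w t - w s‖ ≤ K * ‖u t - u s‖) :
    ∫ s in a..b, ‖w s‖ ^ 2 ≤ K ^ 2 * ∫ s in a..b, ‖u s‖ ^ 2 := by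
  rw [← uIcc_of_le hab.le] at hu hw hwu
  set U := ∫ s in a..b, ‖u s‖ ^ 2
  set W := ∫ s in a..b, ‖w s‖ ^ 2
  have hpointwise (t : ℝ) (ht : t ∈ uIcc a b) :
      (b - a) * ‖w t‖ ^ 2 + W ≤ K ^ 2 * ((b - a) * ‖u t‖ ^ 2 + U) := by
    rw [← integral_norm_sub_sq_of_integral_eq_zero hw hw0 t,
      ← integral_norm_sub_sq_of_integral_eq_zero hu hu0 t, ← intervalIntegral.integral_const_mul]
    refine intervalIntegral.integral_mono_on hab.le ?_ ?_ fun s hs => ?_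
    · exact (by fun_prop : ContinuousOn _ (uIcc a b)).intervalIntegrable
    · exact (by fun_prop : ContinuousOn _ (uIcc a b)).intervalIntegrable
    · rw [← mul_pow]
      exact pow_le_pow_left₀ (norm_nonneg _) (hwu t ht s (Icc_subset_uIcc hs)) 2
  have hdouble : ∫ t in a..b, ((b - a) * ‖w t‖ ^ 2 + W)
      ≤ ∫ t in a..b, K ^ 2 * ((b - a) * ‖u t‖ ^ 2 + U) :=
    intervalIntegral.integral_mono_on hab.le (by fun_prop : ContinuousOn _ _).intervalIntegrable
      (by fun_prop : ContinuousOn _ _).intervalIntegrable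
      fun t ht => hpointwise t (Icc_subset_uIcc ht)
  rw [intervalIntegral.integral_const_mul, intervalIntegral.integral_add,
    intervalIntegral.integral_add, intervalIntegral.integral_const_mul,
    intervalIntegral.integral_const_mul, intervalIntegral.integral_const, smul_eq_mul,
    intervalIntegral.integral_const, smul_eq_mul] at hdouble
  · change (b - a) * W + (b - a) * W ≤ K ^ 2 * ((b - a) * U + (b - a) * U) at hdouble
    nlinarith [sub_pos.2 hab]
  all_goals exact ContinuousOn.intervalIntegrable (μ := volume) (by fun_prop)

end MeanZero

theorem LipschitzWith.apply_eq_zero_of_periodic_of_mul_lt_two_pi {ι : Type*} [Fintype ι]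
    {v : EuclideanSpace ℝ ι → EuclideanSpace ℝ ι} {K : ℝ≥0} (hv : LipschitzWith K v)
    {f : ℝ → EuclideanSpace ℝ ι} {T : ℝ} (hT : 0 < T) (hTK : T * K < 2 * π)
    (hf : ∀ t ∈ Icc 0 T, HasDerivAt f (v (f t)) t) (hper : f T = f 0) :
    v (f 0) = 0 := by
  have hfc : ContinuousOn f (Icc 0 T) := fun t ht => (hf t ht).continuousAt.continuousWithinAt
  have hg : ContinuousOn (fun t => v (f t)) (Icc 0 T) := hv.continuous.comp_continuousOn hfc
  have hg0 : ∫ t in (0)..T, v (f t) = 0 := by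
    rw [intervalIntegral.integral_eq_sub_of_hasDerivAt (fun t ht => hf t (uIcc_of_le hT.le ▸ ht))
      (hg.intervalIntegrable_of_Icc hT.le), hper, sub_self]
  set m := T⁻¹ • ∫ t in (0)..T, f t
  have hu0 : ∫ t in (0)..T, (f t - m) = 0 := by
    rw [intervalIntegral.integral_sub (hfc.intervalIntegrable_of_Icc hT.le)
      intervalIntegrable_const, intervalIntegral.integral_const, sub_zero, smul_smul,
      mul_inv_cancel₀ hT.ne', one_smul, sub_self]
  have henergy : ∫ t in (0)..T, ‖v (f t)‖ ^ 2 ≤ K ^ 2 * ∫ t in (0)..T, ‖f t - m‖ ^ 2 :=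
    integral_norm_sq_le_of_norm_sub_le hT (hfc.sub continuousOn_const) hg hu0 hg0
      fun t _ s _ => by simpa using hv.norm_sub_le (f t) (f s)
  have hwirtinger :
      ∫ t in (0)..T, ‖f t - m‖ ^ 2 ≤ (T / (2 * π)) ^ 2 * ∫ t in (0)..T, ‖v (f t)‖ ^ 2 := by
    simpa only [sub_zero] using EuclideanSpace.wirtinger_inequality hT
      (fun t ht => (hf t ht).sub_const m) hg (by simp only [hper]) hu0
  have hcontract : (K * (T / (2 * π))) ^ 2 < 1 := by
    rw [pow_lt_one_iff_of_nonneg (by positivity) two_ne_zero, mul_div_assoc',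
      div_lt_one (by positivity), mul_comm]
    exact hTK
  by_contra hne
  have hpos : 0 < ∫ t in (0)..T, ‖v (f t)‖ ^ 2 :=
    intervalIntegral.integral_pos hT (hg.norm.pow 2) (fun t _ => by positivity)
      ⟨0, left_mem_Icc.2 hT.le, by positivity⟩
  nlinarith

theorem LipschitzWith.eq_of_hasDerivAt_of_apply_eq_zero {E : Type*} [NormedAddCommGroup E]
    [NormedSpace ℝ E] {v : E → E} {K : ℝ≥0} (hv : LipschitzWith K v) {f : ℝ → E} {x : E}
    (hx : v x = 0) (hf : ∀ t, HasDerivAt f (v (f t)) t) (h0 : f 0 = x) {t : ℝ} (ht : 0 ≤ t) :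
    f t = x :=
  ODE_solution_unique (v := fun _ => v) (g := fun _ => x) (fun _ => hv)
    (continuous_iff_continuousAt.2 fun s => (hf s).continuousAt).continuousOn
    (fun s _ => (hf s).hasDerivWithinAt)
    continuousOn_const (fun s _ => by simpa [hx] using hasDerivWithinAt_const s (Ici s) x) h0
    ⟨ht, le_rfl⟩

/-- **Fixed points of small-time flow maps are equilibria.**  If `v` is
Lipschitz with constant `L` and `Φ` is its global flow, then for every
`0 < τ < 2π/L` the fixed point set of the time-`τ` map coincides with the
zero set of `v`. -/
theorem fixedPoints_of_small_time_map_eq_zeros {N : ℕ} (L : ℝ) (hL : 0 < L)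
    (v : EuclideanSpace ℝ (Fin N) → EuclideanSpace ℝ (Fin N))
    (hv : ∀ x y, ‖v x - v y‖ ≤ L * ‖x - y‖)
    (Φ : ℝ × EuclideanSpace ℝ (Fin N) → EuclideanSpace ℝ (Fin N))
    (hΦ0 : ∀ x, Φ (0, x) = x)
    (hΦd : ∀ t x, HasDerivAt (fun τ : ℝ => Φ (τ, x)) (v (Φ (t, x))) t)
    (τ : ℝ) (hτ0 : 0 < τ) (hτ : τ < 2 * Real.pi / L)
    (x : EuclideanSpace ℝ (Fin N)) :
    Φ (τ, x) = x ↔ v x = 0 := by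
  have hLip : LipschitzWith ⟨L, hL.le⟩ v :=
    LipschitzWith.of_dist_le_mul fun y z => by rw [dist_eq_norm, dist_eq_norm]; exact hv y z
  constructor
  · intro hfix
    simpa [hΦ0] using hLip.apply_eq_zero_of_periodic_of_mul_lt_two_pi hτ0
      ((lt_div_iff₀ hL).1 hτ) (fun t _ => hΦd t x) (by simp [hfix, hΦ0])
  · intro hx
    exact hLip.eq_of_hasDerivAt_of_apply_eq_zero hx (fun t => hΦd t x) (hΦ0 x) hτ0.le
end

section
/- Let v : ℝ^N → ℝ^N be a globally Lipschitz vector field with global flow Φ : ℝ × ℝ^N → ℝ^N, and let x₀ ∈ ℝ^N satisfy v(x₀) ≠ 0. Then there exist ε > 0 and a neighborhood V of x₀ such that x ≠ Φ(s,x) for all x ∈ V and 0 < s < ε, and the map (s,x) ↦ (x − Φ(s,x))/‖x − Φ(s,x)‖, defined for 0 < s < ε and x ∈ V, converges to −v(x₀)/‖v(x₀)‖ as (s,x) → (0, x₀) with s > 0. -/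
open Filter Topology

/-- **Normalized displacement of the flow near a nonequilibrium point.**
If `v x₀ ≠ 0`, then for small positive times the time-`s` flow map has no fixed
points near `x₀`, and the normalized displacement `(x - Φ(s,x))/‖x - Φ(s,x)‖`
converges to `-v(x₀)/‖v(x₀)‖` as `(s,x) → (0,x₀)` with `s > 0`. -/
theorem normalized_displacement_tendsto {N : ℕ}
    (v : EuclideanSpace ℝ (Fin N) → EuclideanSpace ℝ (Fin N))
    (L : ℝ) (hL : 0 ≤ L)
    (hv : ∀ x y, ‖v x - v y‖ ≤ L * ‖x - y‖)
    (Φ : ℝ × EuclideanSpace ℝ (Fin N) → EuclideanSpace ℝ (Fin N))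
    (hΦ0 : ∀ x, Φ (0, x) = x)
    (hΦflow : ∀ s t x, Φ (t + s, x) = Φ (t, Φ (s, x)))
    (hΦd : ∀ t x, HasDerivAt (fun τ : ℝ => Φ (τ, x)) (v (Φ (t, x))) t)
    (x₀ : EuclideanSpace ℝ (Fin N)) (hx₀ : v x₀ ≠ 0) :
    ∃ ε > (0 : ℝ), ∃ V ∈ 𝓝 x₀,
      (∀ x ∈ V, ∀ s : ℝ, 0 < s → s < ε → x ≠ Φ (s, x)) ∧
      Tendsto
        (fun p : ℝ × EuclideanSpace ℝ (Fin N) =>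
          (‖p.2 - Φ (p.1, p.2)‖)⁻¹ • (p.2 - Φ (p.1, p.2)))
        ((𝓝[>] (0 : ℝ)) ×ˢ 𝓝 x₀)
        (𝓝 ((‖v x₀‖)⁻¹ • (-(v x₀)))) := by
  set c : ℝ := ‖v x₀‖ with hc
  have hcpos : 0 < c := norm_pos_iff.mpr hx₀
  -- the explicit bound
  set B : ℝ → EuclideanSpace ℝ (Fin N) → ℝ :=
    fun s x => (‖x - x₀‖ + c * s) * Real.exp (L * s) with hB
  have hBnonneg : ∀ s x, 0 ≤ s → 0 ≤ B s x := by
    intro s x hs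
    have := Real.exp_pos (L * s)
    have := norm_nonneg (x - x₀)
    positivity
  have hBmono : ∀ x, ∀ t s : ℝ, 0 ≤ t → t ≤ s → B t x ≤ B s x := by
    intro x t s ht hts
    simp only [hB]
    have h1 : Real.exp (L * t) ≤ Real.exp (L * s) :=
      Real.exp_le_exp.mpr (mul_le_mul_of_nonneg_left hts hL)
    have h2 : 0 ≤ Real.exp (L * t) := (Real.exp_pos _).le
    have h3 : 0 ≤ ‖x - x₀‖ := norm_nonneg _
    have h4 : c * t ≤ c * s := mul_le_mul_of_nonneg_left hts hcpos.le
    have hs : 0 ≤ s := ht.trans hts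
    exact mul_le_mul (by linarith) h1 h2 (by positivity)
  -- exp(a) - 1 ≤ a * exp(a) for a ≥ 0
  have hexp : ∀ a : ℝ, 0 ≤ a → Real.exp a - 1 ≤ a * Real.exp a := by
    intro a ha
    have h1 := Real.add_one_le_exp (-a)
    have h2 : Real.exp (-a) * Real.exp a = 1 := by
      rw [← Real.exp_add]; simp
    nlinarith [Real.exp_pos a]
  -- gronwallBound ≤ B
  have hgbB : ∀ (δ t : ℝ), 0 ≤ δ → 0 ≤ t →
      gronwallBound δ L c t ≤ (δ + c * t) * Real.exp (L * t) := by
    intro δ t hδ ht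
    rcases eq_or_lt_of_le hL with hL0 | hLpos
    · rw [← hL0, gronwallBound_K0]
      simp [← hL0]
    · rw [gronwallBound_of_K_ne_0 hLpos.ne']
      have he := hexp (L * t) (by positivity)
      have h1 : c / L * (Real.exp (L * t) - 1) ≤ c * t * Real.exp (L * t) := by
        rw [div_mul_eq_mul_div, div_le_iff₀ hLpos]
        calc c * (Real.exp (L * t) - 1) ≤ c * (L * t * Real.exp (L * t)) := by
              exact mul_le_mul_of_nonneg_left he hcpos.le
          _ = c * t * Real.exp (L * t) * L := by ring
      nlinarith [Real.exp_pos (L * t)]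
  -- Grönwall bound on trajectories
  have key1 : ∀ (x : EuclideanSpace ℝ (Fin N)) (s : ℝ), 0 ≤ s →
      ∀ t ∈ Set.Icc (0:ℝ) s, ‖Φ (t, x) - x₀‖ ≤ B t x := by
    intro x s hs t ht
    have hcont : Continuous fun τ : ℝ => Φ (τ, x) :=
      continuous_iff_continuousAt.mpr fun τ => (hΦd τ x).continuousAt
    have hgw := norm_le_gronwallBound_of_norm_deriv_right_le
      (f := fun τ : ℝ => Φ (τ, x) - x₀) (f' := fun τ : ℝ => v (Φ (τ, x)))
      (δ := ‖x - x₀‖) (K := L) (ε := c) (a := 0) (b := s)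
      ((hcont.sub continuous_const).continuousOn)
      (fun τ _ => ((hΦd τ x).sub_const x₀).hasDerivWithinAt)
      (by simp only [hΦ0]; exact le_refl _)
      (fun τ _ => by
        have h1 := hv (Φ (τ, x)) x₀
        have h2 := norm_sub_norm_le (v (Φ (τ, x))) (v x₀)
        simp only [hc]
        linarith)
      t ht
    calc ‖Φ (t, x) - x₀‖ ≤ gronwallBound ‖x - x₀‖ L c (t - 0) := hgw
      _ = gronwallBound ‖x - x₀‖ L c t := by rw [sub_zero]
      _ ≤ B t x := by simp only [hB]; exact hgbB _ _ (norm_nonneg _) ht.1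
  -- mean value estimate for the displacement
  have key2 : ∀ (x : EuclideanSpace ℝ (Fin N)) (s : ℝ), 0 < s →
      ‖(x - Φ (s, x)) + s • v x₀‖ ≤ L * B s x * s := by
    intro x s hs
    have hconv : Convex ℝ (Set.Icc (0:ℝ) s) := convex_Icc 0 s
    have hmvt := hconv.norm_image_sub_le_of_norm_hasDerivWithin_le
      (f := fun τ : ℝ => Φ (τ, x) - τ • v x₀)
      (f' := fun τ : ℝ => v (Φ (τ, x)) - v x₀)
      (C := L * B s x)
      (fun τ _ => by
        have h := (hΦd τ x).sub ((hasDerivAt_id τ).smul_const (v x₀))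
        simp only [id, one_smul] at h
        exact h.hasDerivWithinAt)
      (fun τ hτ => by
        calc ‖v (Φ (τ, x)) - v x₀‖ ≤ L * ‖Φ (τ, x) - x₀‖ := hv _ _
          _ ≤ L * B τ x := mul_le_mul_of_nonneg_left (key1 x s hs.le τ hτ) hL
          _ ≤ L * B s x := mul_le_mul_of_nonneg_left (hBmono x τ s hτ.1 hτ.2) hL)
      (Set.left_mem_Icc.2 hs.le) (Set.right_mem_Icc.2 hs.le)
    simp only [hΦ0, zero_smul, sub_zero, one_smul] at hmvt
    have heq : (x - Φ (s, x)) + s • v x₀ = -((Φ (s, x) - s • v x₀) - x) := by abel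
    rw [heq, norm_neg]
    calc ‖(Φ (s, x) - s • v x₀) - x‖ ≤ L * B s x * ‖s‖ := hmvt
      _ = L * B s x * s := by rw [Real.norm_eq_abs, abs_of_pos hs]

  -- estimate on the normalized-by-time displacement
  have hu_est : ∀ (x : EuclideanSpace ℝ (Fin N)) (s : ℝ), 0 < s →
      ‖s⁻¹ • (x - Φ (s, x)) - (-(v x₀))‖ ≤ L * B s x := by
    intro x s hs
    have h1 : s⁻¹ • (x - Φ (s, x)) - (-(v x₀)) = s⁻¹ • ((x - Φ (s, x)) + s • v x₀) := by
      rw [smul_add, smul_smul, inv_mul_cancel₀ hs.ne', one_smul, sub_neg_eq_add]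
    rw [h1, norm_smul, Real.norm_eq_abs, abs_of_pos (inv_pos.2 hs)]
    calc s⁻¹ * ‖(x - Φ (s, x)) + s • v x₀‖ ≤ s⁻¹ * (L * B s x * s) :=
          mul_le_mul_of_nonneg_left (key2 x s hs) (inv_pos.2 hs).le
      _ = L * B s x := by field_simp
  -- the product filter
  set F : Filter (ℝ × EuclideanSpace ℝ (Fin N)) := (𝓝[>] (0:ℝ)) ×ˢ 𝓝 x₀ with hF
  have hFle : F ≤ 𝓝 (0, x₀) := by
    rw [nhds_prod_eq]
    exact Filter.prod_mono nhdsWithin_le_nhds le_rfl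
  have hspos : ∀ᶠ p : ℝ × EuclideanSpace ℝ (Fin N) in F, 0 < p.1 :=
    Filter.Eventually.prod_inl (self_mem_nhdsWithin) _
  -- L * B → 0
  have hBtend : Tendsto (fun p : ℝ × EuclideanSpace ℝ (Fin N) => L * B p.1 p.2) F (𝓝 0) := by
    have hcont : Continuous fun p : ℝ × EuclideanSpace ℝ (Fin N) => L * B p.1 p.2 := by
      simp only [hB]
      fun_prop
    have h0 : L * B 0 x₀ = 0 := by simp [hB]
    have h : Tendsto (fun p : ℝ × EuclideanSpace ℝ (Fin N) => L * B p.1 p.2)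
        (𝓝 (0, x₀)) (𝓝 (L * B 0 x₀)) := hcont.tendsto (0, x₀)
    rw [h0] at h
    exact h.mono_left hFle
  -- u tends to -(v x₀)
  have hutend : Tendsto (fun p : ℝ × EuclideanSpace ℝ (Fin N) =>
      (p.1)⁻¹ • (p.2 - Φ (p.1, p.2))) F (𝓝 (-(v x₀))) := by
    rw [tendsto_iff_norm_sub_tendsto_zero]
    apply squeeze_zero' (Filter.Eventually.of_forall fun p => norm_nonneg _) _ hBtend
    filter_upwards [hspos] with p hp
    exact hu_est p.2 p.1 hp
  -- normalization map is continuous at -(v x₀)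
  have hncont : ContinuousAt (fun z : EuclideanSpace ℝ (Fin N) => (‖z‖)⁻¹ • z) (-(v x₀)) := by
    have hz : ‖(-(v x₀))‖ ≠ 0 := by simpa using hx₀
    exact ((continuous_norm.continuousAt).inv₀ hz).smul continuousAt_id
  have hmain : Tendsto
      (fun p : ℝ × EuclideanSpace ℝ (Fin N) =>
        (‖p.2 - Φ (p.1, p.2)‖)⁻¹ • (p.2 - Φ (p.1, p.2))) F
      (𝓝 ((‖v x₀‖)⁻¹ • (-(v x₀)))) := by
    have hcomp := hncont.tendsto.comp hutend
    rw [norm_neg] at hcomp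
    apply hcomp.congr'
    filter_upwards [hspos] with p hp
    show (‖(p.1)⁻¹ • (p.2 - Φ (p.1, p.2))‖)⁻¹ • ((p.1)⁻¹ • (p.2 - Φ (p.1, p.2)))
        = (‖p.2 - Φ (p.1, p.2)‖)⁻¹ • (p.2 - Φ (p.1, p.2))
    set d := p.2 - Φ (p.1, p.2)
    rw [norm_smul, Real.norm_eq_abs, abs_of_pos (inv_pos.2 hp), smul_smul,
      mul_inv, inv_inv]
    congr 1
    rw [mul_assoc, mul_comm _ ((p.1)⁻¹), ← mul_assoc, mul_inv_cancel₀ hp.ne', one_mul]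
  -- choose ε and V for nonvanishing
  have hsmall : ∀ᶠ q : ℝ × EuclideanSpace ℝ (Fin N) in 𝓝 (0, x₀), L * B q.1 q.2 < c := by
    have hcont : Continuous fun q : ℝ × EuclideanSpace ℝ (Fin N) => L * B q.1 q.2 := by
      simp only [hB]; fun_prop
    have h0 : L * B 0 x₀ = 0 := by simp [hB]
    have := hcont.continuousAt (x := (0, x₀))
    have hlt : (fun q : ℝ × EuclideanSpace ℝ (Fin N) => L * B q.1 q.2) (0, x₀) < c := by
      simpa [h0] using hcpos
    exact this.eventually_lt continuousAt_const hlt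
  rw [nhds_prod_eq, Filter.eventually_prod_iff] at hsmall
  obtain ⟨pa, hpa, pb, hpb, hab⟩ := hsmall
  obtain ⟨ε, hε, hball⟩ := Metric.eventually_nhds_iff_ball.mp hpa
  refine ⟨ε, hε, {x | pb x}, hpb, ?_, hmain⟩
  intro x hx s hs hsε hfix
  have hsa : pa s := hball s (by simpa [Real.dist_eq, abs_of_pos hs] using hsε)
  have hlt := hab hsa hx
  have hest := hu_est x s hs
  rw [← hfix] at hest
  simp only [sub_self, smul_zero, zero_sub, norm_neg, norm_neg] at hest
  rw [← hc] at hest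
  exact absurd (hest.trans_lt hlt) (lt_irrefl c)
end

section
/- Let st ⊆ ℝ^N be compact, let gd ⊆ st be a closed subset, set fs := st \ gd, and let F : ℝ^N → ℝ^N be a globally Lipschitz vector field such that there exists a continuous local semiflow φ on fs whose trajectories t ↦ φ(t,x) are differentiable with derivative F(φ(t,x)) (in particular trajectories of F starting in fs remain in fs as long as they are defined under φ). Let α : st → [0,∞) be Lipschitz with α⁻¹(0) = gd. Then there exists a unique continuous semiflow Φ_α : [0,∞) × st → st such that for every x ∈ st the curve t ↦ Φ_α(t,x) is differentiable with ∂Φ_α/∂t(t,x) = α(Φ_α(t,x)) · F(Φ_α(t,x)); in particular st is positively invariant under the flow of the vector field α·F (extended Lipschitz-continuously to ℝ^N). -/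
/-!
Extend `α • F` from the compact set `st` to a bounded, globally Lipschitz vector field `G` on
`ℝ^N` (bounded so that Picard–Lindelöf applies on every interval `[0, n]`). Its forward flow `Φ`
exists, is unique, jointly continuous and a semigroup; the remaining point is that `st` is
positively invariant. Points of `gd` are zeros of `G`, hence fixed. From a point `y ∈ fs` the local
semiflow gives an integral curve `ψ` of `F` inside `fs`, and the time change `σ' = α (ψ σ)` turns
`ψ ∘ σ` into an integral curve of `α • F = G`, which `Φ` must follow; so `Φ` stays in `st` for a
short time. A closed set that every point leaves only after a positive time is positively
invariant. Finally any `Ψ` as in the statement stays in `st`, where `G = α • F`, so its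
trajectories are integral curves of `G` and agree with those of `Φ`.
-/

open Set

/-- `IsRescaledSemiflow st α F Φ` says that `Φ` restricts to a continuous
semiflow `[0,∞) × st → st` whose trajectories are differentiable with
derivative given by the rescaled vector field `α • F`. -/
def IsRescaledSemiflow {N : ℕ} (st : Set (EuclideanSpace ℝ (Fin N)))
    (α : EuclideanSpace ℝ (Fin N) → ℝ)
    (F : EuclideanSpace ℝ (Fin N) → EuclideanSpace ℝ (Fin N))
    (Φ : ℝ → EuclideanSpace ℝ (Fin N) → EuclideanSpace ℝ (Fin N)) : Prop :=
  ContinuousOn (fun p : ℝ × EuclideanSpace ℝ (Fin N) => Φ p.1 p.2)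
      (Set.Ici (0 : ℝ) ×ˢ st) ∧
  (∀ t : ℝ, 0 ≤ t → ∀ x ∈ st, Φ t x ∈ st) ∧
  (∀ x ∈ st, Φ 0 x = x) ∧
  (∀ t s : ℝ, 0 ≤ t → 0 ≤ s → ∀ x ∈ st, Φ (t + s) x = Φ t (Φ s x)) ∧
  (∀ x ∈ st, ∀ t : ℝ, 0 ≤ t →
    HasDerivWithinAt (fun τ : ℝ => Φ τ x) (α (Φ t x) • F (Φ t x))
      (Set.Ici (0 : ℝ)) t)

open Bornology
open scoped NNReal

theorem LipschitzOnWith.exists_lipschitzOnWith_smul {α 𝕜 E : Type*} [PseudoMetricSpace α]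
    [NormedField 𝕜] [SeminormedAddCommGroup E] [NormedSpace 𝕜 E] {f : α → 𝕜} {g : α → E} {s : Set α}
    {Kf Kg : ℝ≥0} (hf : LipschitzOnWith Kf f s) (hg : LipschitzOnWith Kg g s)
    (hfb : IsBounded (f '' s)) (hgb : IsBounded (g '' s)) :
    ∃ K, LipschitzOnWith K (fun x => f x • g x) s := by
  obtain ⟨Mf, hMf⟩ := hfb.exists_norm_le
  obtain ⟨Mg, hMg⟩ := hgb.exists_norm_le
  refine ⟨_, LipschitzOnWith.of_dist_le' (K := Kf * Mg + Mf * Kg) fun x hx y hy => ?_⟩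
  have hfx := hMf _ (mem_image_of_mem f hy)
  have hgx := hMg _ (mem_image_of_mem g hx)
  have hdf := hf.dist_le_mul x hx y hy
  have hdg := hg.dist_le_mul x hx y hy
  rw [dist_eq_norm] at hdf hdg ⊢
  calc ‖f x • g x - f y • g y‖ = ‖(f x - f y) • g x + f y • (g x - g y)‖ := by
        rw [sub_smul, smul_sub, sub_add_sub_cancel]
    _ ≤ ‖f x - f y‖ * ‖g x‖ + ‖f y‖ * ‖g x - g y‖ :=
        (norm_add_le _ _).trans (add_le_add (norm_smul_le _ _) (norm_smul_le _ _))
    _ ≤ (Kf * dist x y) * Mg + Mf * (Kg * dist x y) := by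
        gcongr
        exact (norm_nonneg _).trans (hMf _ (mem_image_of_mem f hy))
    _ = (Kf * Mg + Mf * Kg) * dist x y := by ring

theorem EuclideanSpace.exists_lipschitzWith_one_eqOn_id_isBounded_range {ι : Type*} [Fintype ι]
    {s : Set (EuclideanSpace ℝ ι)} (hs : IsBounded s) :
    ∃ r : EuclideanSpace ℝ ι → EuclideanSpace ℝ ι,
      LipschitzWith 1 r ∧ EqOn r id s ∧ IsBounded (range r) := by
  obtain ⟨M, hM0, hM⟩ := hs.exists_pos_norm_le
  have hMM : -M ≤ M := by linarith
  refine ⟨fun v => WithLp.toLp 2 fun i => projIcc (-M) M hMM (v i), ?_, ?_, ?_⟩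
  · refine LipschitzWith.of_dist_le_mul fun v w => ?_
    rw [EuclideanSpace.dist_eq, EuclideanSpace.dist_eq, NNReal.coe_one, one_mul]
    gcongr with i
    simpa [Subtype.dist_eq] using (LipschitzWith.projIcc hMM).dist_le_mul (v i) (w i)
  · intro v hv
    ext i
    have hvi : |v i| ≤ M := (PiLp.norm_apply_le v i).trans (hM v hv)
    simp [projIcc_of_mem hMM (abs_le.1 hvi)]
  · refine ((isCompact_univ_pi fun _ => isCompact_Icc (a := -M) (b := M)).image
      (PiLp.continuous_toLp 2 _)).isBounded.subset ?_
    rintro _ ⟨v, rfl⟩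
    exact ⟨_, fun i _ => (projIcc (-M) M hMM (v i)).2, rfl⟩

theorem LipschitzOnWith.exists_lipschitzWith_norm_le_eqOn {α ι : Type*} [PseudoMetricSpace α]
    [Fintype ι] {s : Set α} {f : α → EuclideanSpace ℝ ι} {K : ℝ≥0}
    (hf : LipschitzOnWith K f s) (hb : IsBounded (f '' s)) :
    ∃ (g : α → EuclideanSpace ℝ ι) (K' M : ℝ≥0),
      LipschitzWith K' g ∧ (∀ x, ‖g x‖ ≤ M) ∧ EqOn f g s := by
  obtain ⟨g₀, hg₀, hfg₀⟩ := hf.extend_finite_dimension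
  obtain ⟨r, hr, hr_id, hr_bdd⟩ :=
    EuclideanSpace.exists_lipschitzWith_one_eqOn_id_isBounded_range hb
  obtain ⟨M, hM⟩ := hr_bdd.exists_norm_le
  refine ⟨r ∘ g₀, _, M.toNNReal, hr.comp hg₀, fun x => ?_, fun x hx => ?_⟩
  · exact (hM _ (mem_range_self _)).trans (Real.le_coe_toNNReal M)
  · simp only [Function.comp_apply, ← hfg₀ hx]
    exact (hr_id (mem_image_of_mem f hx)).symm

theorem IsCompact.exists_lipschitzWith_norm_le_eqOn_smul {α ι : Type*} [PseudoMetricSpace α]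
    [Fintype ι] {s : Set α} (hs : IsCompact s) {a : α → ℝ} {F : α → EuclideanSpace ℝ ι}
    {Ka KF : ℝ≥0} (ha : LipschitzOnWith Ka a s) (hF : LipschitzOnWith KF F s) :
    ∃ (G : α → EuclideanSpace ℝ ι) (K M : ℝ≥0),
      LipschitzWith K G ∧ (∀ x, ‖G x‖ ≤ M) ∧ EqOn (fun x => a x • F x) G s := by
  obtain ⟨K, haF⟩ := ha.exists_lipschitzOnWith_smul hF
    (hs.image_of_continuousOn ha.continuousOn).isBounded
    (hs.image_of_continuousOn hF.continuousOn).isBounded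
  exact haF.exists_lipschitzWith_norm_le_eqOn (hs.image_of_continuousOn haF.continuousOn).isBounded

section IntegralCurve

variable {E : Type*} [NormedAddCommGroup E] [NormedSpace ℝ E]
  {v : ℝ → E → E} {K M : ℝ≥0} {f g : ℝ → E} {a b : ℝ}

theorem IsIntegralCurveOn.eqOn_Icc_of_lipschitzWith (hv : ∀ t, LipschitzWith K (v t))
    (hf : IsIntegralCurveOn f v (Icc a b)) (hg : IsIntegralCurveOn g v (Icc a b))
    (ha : f a = g a) : EqOn f g (Icc a b) :=
  ODE_solution_unique hv hf.continuousOn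
    (fun t ht => (hf t (Ico_subset_Icc_self ht)).mono_of_mem_nhdsWithin (Icc_mem_nhdsGE_of_mem ht))
    hg.continuousOn
    (fun t ht => (hg t (Ico_subset_Icc_self ht)).mono_of_mem_nhdsWithin (Icc_mem_nhdsGE_of_mem ht))
    ha

theorem IsIntegralCurveOn.eqOn_Ici_of_lipschitzWith (hv : ∀ t, LipschitzWith K (v t))
    (hf : IsIntegralCurveOn f v (Ici a)) (hg : IsIntegralCurveOn g v (Ici a))
    (ha : f a = g a) : EqOn f g (Ici a) := fun _ ht =>
  (hf.mono Icc_subset_Ici_self).eqOn_Icc_of_lipschitzWith hv (hg.mono Icc_subset_Ici_self) ha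
    ⟨ht, le_rfl⟩

theorem IsIntegralCurveOn.lipschitzOnWith_of_norm_le {s : Set ℝ} (hf : IsIntegralCurveOn f v s)
    (hs : Convex ℝ s) (hM : ∀ t ∈ s, ‖v t (f t)‖ ≤ M) : LipschitzOnWith M f s :=
  hs.lipschitzOnWith_of_nnnorm_hasDerivWithin_le hf fun t ht => by exact_mod_cast hM t ht

theorem exists_isIntegralCurveOn_Ici_of_lipschitzWith_of_norm_le [CompleteSpace E] {G : E → E}
    (hG : LipschitzWith K G) (hM : ∀ x, ‖G x‖ ≤ M) (x₀ : E) :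
    ∃ f : ℝ → E, f 0 = x₀ ∧ IsIntegralCurveOn f (fun _ => G) (Ici 0) := by
  have hloc (n : ℕ) : ∃ f : ℝ → E, f 0 = x₀ ∧ IsIntegralCurveOn f (fun _ => G) (Icc 0 n) :=
    (IsPicardLindelof.of_time_independent (t₀ := ⟨0, le_rfl, n.cast_nonneg⟩) (a := M * n) (r := 0)
      (fun x _ => hM x) hG.lipschitzOnWith (by simp)).exists_eq_forall_mem_Icc_hasDerivWithinAt₀
  choose sol hsol₀ hsol using hloc
  have hagree {m n : ℕ} {t : ℝ} (ht : t ∈ Icc 0 (m : ℝ)) (htn : t ≤ n) : sol m t = sol n t :=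
    ((hsol m).mono (Icc_subset_Icc_right ht.2)).eqOn_Icc_of_lipschitzWith (fun _ => hG)
      ((hsol n).mono (Icc_subset_Icc_right htn)) (by rw [hsol₀, hsol₀]) ⟨ht.1, le_rfl⟩
  refine ⟨fun t => sol ⌈t⌉₊ t, by simpa using hsol₀ 0, fun t ht => ?_⟩
  have htn : t < (⌈t⌉₊ + 1 : ℕ) := by push_cast; linarith [Nat.le_ceil t]
  have hnhds : Icc 0 ((⌈t⌉₊ + 1 : ℕ) : ℝ) ∈ nhdsWithin t (Ici 0) := by
    rw [← Ici_inter_Iic]; exact inter_mem_nhdsWithin _ (Iic_mem_nhds htn)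
  have heq := hagree ⟨ht, Nat.le_ceil t⟩ htn.le
  show HasDerivWithinAt _ (G (sol ⌈t⌉₊ t)) _ _
  rw [heq]
  exact ((hsol _ t ⟨ht, htn.le⟩).mono_of_mem_nhdsWithin hnhds).congr_of_eventuallyEq
    (Filter.eventually_of_mem hnhds fun τ hτ => hagree ⟨hτ.1, Nat.le_ceil τ⟩ hτ.2) heq

end IntegralCurve

section TimeChange

theorem exists_isIntegralCurveOn_Icc_mapsTo_Icc {h : ℝ → ℝ} {K M : ℝ≥0} (hh : LipschitzWith K h)
    (h₀ : ∀ ρ, 0 ≤ h ρ) (hM : ∀ ρ, h ρ ≤ M) {ε : ℝ} (hε : 0 < ε) :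
    ∃ δ > 0, ∃ σ : ℝ → ℝ, σ 0 = 0 ∧ MapsTo σ (Icc 0 δ) (Icc 0 ε) ∧
      IsIntegralCurveOn σ (fun _ => h) (Icc 0 δ) := by
  set δ := ε / (M + 1)
  have hδ : 0 < δ := by positivity
  have hMδ : M * δ ≤ ε := by
    rw [mul_div_assoc', div_le_iff₀ (by positivity)]; nlinarith [M.coe_nonneg]
  obtain ⟨σ, hσ₀, hσ⟩ : ∃ σ : ℝ → ℝ, σ 0 = 0 ∧ IsIntegralCurveOn σ (fun _ => h) (Icc 0 δ) :=
    (IsPicardLindelof.of_time_independent (t₀ := ⟨0, le_rfl, hδ.le⟩) (x₀ := (0 : ℝ))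
      (a := (M * δ).toNNReal) (r := 0) (L := M)
      (fun ρ _ => by simpa [abs_of_nonneg (h₀ ρ)] using hM ρ) hh.lipschitzOnWith
      (by simp [hδ.le])).exists_eq_forall_mem_Icc_hasDerivWithinAt₀
  have hσ_mono : MonotoneOn σ (Icc 0 δ) :=
    monotoneOn_of_hasDerivWithinAt_nonneg (convex_Icc 0 δ) hσ.continuousOn
      (fun u hu => (hσ u (interior_subset hu)).mono interior_subset) fun _ _ => h₀ _
  have hσ_lip : LipschitzOnWith M σ (Icc 0 δ) :=
    hσ.lipschitzOnWith_of_norm_le (convex_Icc 0 δ)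
      fun _ _ => by simpa [abs_of_nonneg (h₀ _)] using hM _
  refine ⟨δ, hδ, σ, hσ₀, fun u hu => ⟨?_, ?_⟩, hσ⟩
  · simpa [hσ₀] using hσ_mono ⟨le_rfl, hδ.le⟩ hu hu.1
  · have := hσ_lip.dist_le_mul u hu 0 ⟨le_rfl, hδ.le⟩
    rw [hσ₀, Real.dist_eq, Real.dist_eq, sub_zero, sub_zero, abs_of_nonneg hu.1] at this
    nlinarith [le_abs_self (σ u), hu.2, M.coe_nonneg]

variable {E : Type*} [NormedAddCommGroup E] [NormedSpace ℝ E] {F : E → E} {a : E → ℝ}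
  {s : Set E} {Ka : ℝ≥0} {ψ : ℝ → E} {ε : ℝ}

theorem IsIntegralCurveOn.exists_comp_isIntegralCurveOn_smul (hF : Continuous F)
    (ha : LipschitzOnWith Ka a s) (ha₀ : ∀ x ∈ s, 0 ≤ a x) (hε : 0 < ε)
    (hψ : IsIntegralCurveOn ψ (fun _ => F) (Icc 0 ε)) (hψs : MapsTo ψ (Icc 0 ε) s) :
    ∃ δ > 0, ∃ σ : ℝ → ℝ, σ 0 = 0 ∧ MapsTo σ (Icc 0 δ) (Icc 0 ε) ∧
      IsIntegralCurveOn (ψ ∘ σ) (fun _ x => a x • F x) (Icc 0 δ) := by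
  obtain ⟨CF, hCF⟩ := isCompact_Icc.exists_bound_of_continuousOn
    (hF.comp_continuousOn hψ.continuousOn)
  obtain ⟨Ca, hCa⟩ := isCompact_Icc.exists_bound_of_continuousOn
    (ha.continuousOn.comp hψ.continuousOn hψs)
  have hψ_lip : LipschitzOnWith CF.toNNReal ψ (Icc 0 ε) :=
    hψ.lipschitzOnWith_of_norm_le (convex_Icc 0 ε)
      fun τ hτ => (hCF τ hτ).trans (Real.le_coe_toNNReal CF)
  -- `ψ` is only controlled on `[0, ε]`; clamping time there makes the speed `a ∘ ψ`
  -- Lipschitz on all of `ℝ`, as Picard–Lindelöf requires.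
  let clamp : ℝ → ℝ := fun ρ => projIcc 0 ε hε.le ρ
  have hclamp : MapsTo clamp univ (Icc 0 ε) := fun ρ _ => (projIcc 0 ε hε.le ρ).2
  have hh : LipschitzWith _ (a ∘ ψ ∘ clamp) := lipschitzOnWith_univ.1 <|
    (ha.comp hψ_lip hψs).comp
      ((LipschitzWith.subtype_val _).comp (LipschitzWith.projIcc hε.le)).lipschitzOnWith hclamp
  obtain ⟨δ, hδ, σ, hσ₀, hσε, hσ⟩ := exists_isIntegralCurveOn_Icc_mapsTo_Icc hh
    (fun ρ => ha₀ _ (hψs (hclamp (mem_univ ρ))))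
    (fun ρ => (le_abs_self _).trans <|
      (hCa _ (hclamp (mem_univ ρ))).trans (Real.le_coe_toNNReal Ca)) hε
  refine ⟨δ, hδ, σ, hσ₀, hσε, fun u hu => ?_⟩
  have hchain := (hψ (σ u) (hσε hu)).scomp u (hσ u hu) hσε
  simpa [clamp, projIcc_of_mem hε.le (hσε hu)] using hchain

end TimeChange

section ForwardFlow

variable {E : Type*} [NormedAddCommGroup E] [NormedSpace ℝ E]

structure IsForwardFlow (G : E → E) (Φ : ℝ → E → E) : Prop where
  apply_zero : ∀ x, Φ 0 x = x
  isIntegralCurveOn : ∀ x, IsIntegralCurveOn (Φ · x) (fun _ => G) (Ici 0)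

variable {G : E → E} {K M : ℝ≥0}

theorem exists_isForwardFlow [CompleteSpace E] (hG : LipschitzWith K G) (hM : ∀ x, ‖G x‖ ≤ M) :
    ∃ Φ, IsForwardFlow G Φ := by
  choose f hf₀ hf using exists_isIntegralCurveOn_Ici_of_lipschitzWith_of_norm_le hG hM
  exact ⟨fun t x => f x t, hf₀, hf⟩

namespace IsForwardFlow

variable {Φ : ℝ → E → E} (hΦ : IsForwardFlow G Φ) (hG : LipschitzWith K G)
include hΦ hG

theorem eqOn_of_isIntegralCurveOn {f : ℝ → E} (hf : IsIntegralCurveOn f (fun _ => G) (Ici 0)) :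
    EqOn f (Φ · (f 0)) (Ici 0) :=
  hf.eqOn_Ici_of_lipschitzWith (fun _ => hG) (hΦ.isIntegralCurveOn _) (hΦ.apply_zero _).symm

theorem add_apply {t s : ℝ} (ht : 0 ≤ t) (hs : 0 ≤ s) (x : E) :
    Φ (t + s) x = Φ t (Φ s x) := by
  have hshift : IsIntegralCurveOn (fun τ => Φ (τ + s) x) (fun _ => G) (Ici 0) :=
    ((hΦ.isIntegralCurveOn x).comp_add s).mono fun τ hτ =>
      mem_vadd_set.2 ⟨τ + s, add_nonneg hτ hs, by rw [vadd_eq_add, neg_add_cancel_comm_assoc]⟩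
  simpa using hΦ.eqOn_of_isIntegralCurveOn hG hshift ht

theorem apply_eq_self_of_eq_zero {x : E} (hx : G x = 0) {t : ℝ} (ht : 0 ≤ t) : Φ t x = x :=
  (hΦ.eqOn_of_isIntegralCurveOn hG (f := fun _ => x)
    (fun τ _ => by simpa [hx] using hasDerivWithinAt_const τ (Ici 0) x) ht).symm

theorem dist_apply_le {t : ℝ} (ht : 0 ≤ t) (x y : E) :
    dist (Φ t x) (Φ t y) ≤ dist x y * Real.exp (K * t) := by
  have hcurve (z : E) := (hΦ.isIntegralCurveOn z).mono (Icc_subset_Ici_self : Icc 0 t ⊆ Ici 0)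
  simpa [hΦ.apply_zero] using dist_le_of_trajectories_ODE (fun _ => hG)
    (hcurve x).continuousOn
    (fun τ hτ => (hcurve x τ (Ico_subset_Icc_self hτ)).mono_of_mem_nhdsWithin
      (Icc_mem_nhdsGE_of_mem hτ))
    (hcurve y).continuousOn
    (fun τ hτ => (hcurve y τ (Ico_subset_Icc_self hτ)).mono_of_mem_nhdsWithin
      (Icc_mem_nhdsGE_of_mem hτ))
    (le_of_eq (by rw [hΦ.apply_zero, hΦ.apply_zero])) t ⟨ht, le_rfl⟩

theorem continuousOn_uncurry (hM : ∀ x, ‖G x‖ ≤ M) :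
    ContinuousOn (fun p : ℝ × E => Φ p.1 p.2) (Ici 0 ×ˢ univ) :=
  continuousOn_prod_of_continuousOn_lipschitzOnWith _ M
    (fun _ ht => (LipschitzWith.of_dist_le' fun x y =>
      (hΦ.dist_apply_le hG ht x y).trans_eq (mul_comm _ _)).continuous.continuousOn)
    (fun x _ => (hΦ.isIntegralCurveOn x).lipschitzOnWith_of_norm_le (convex_Ici 0) fun _ _ => hM _)

theorem exists_pos_forall_Icc_mem {F : E → E} {a : E → ℝ} {s : Set E} {Ka : ℝ≥0}
    {ψ : ℝ → E} {ε : ℝ} (hGs : EqOn G (fun x => a x • F x) s) (hF : Continuous F)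
    (ha : LipschitzOnWith Ka a s) (ha₀ : ∀ x ∈ s, 0 ≤ a x) (hε : 0 < ε)
    (hψ : IsIntegralCurveOn ψ (fun _ => F) (Icc 0 ε)) (hψs : MapsTo ψ (Icc 0 ε) s) :
    ∃ δ > 0, ∀ u ∈ Icc 0 δ, Φ u (ψ 0) ∈ s := by
  obtain ⟨δ, hδ, σ, hσ₀, hσε, hσ⟩ := hψ.exists_comp_isIntegralCurveOn_smul hF ha ha₀ hε hψs
  have hcs : MapsTo (ψ ∘ σ) (Icc 0 δ) s := hψs.comp hσε
  have hc : IsIntegralCurveOn (ψ ∘ σ) (fun _ => G) (Icc 0 δ) := fun u hu => by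
    simpa only [hGs (hcs hu)] using hσ u hu
  have heq := ((hΦ.isIntegralCurveOn (ψ 0)).mono Icc_subset_Ici_self).eqOn_Icc_of_lipschitzWith
    (fun _ => hG) hc (by simp [hΦ.apply_zero, hσ₀])
  exact ⟨δ, hδ, fun u hu => by simpa only [heq hu] using hcs hu⟩

end IsForwardFlow

end ForwardFlow

theorem mapsTo_of_forall_exists_pos_forall_Icc_mem {X : Type*} [TopologicalSpace X]
    {Φ : ℝ → X → X} {s : Set X} (hs : IsClosed s)
    (hcont : ∀ x ∈ s, ContinuousOn (Φ · x) (Ici 0))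
    (hadd : ∀ x ∈ s, ∀ t u : ℝ, 0 ≤ t → 0 ≤ u → Φ (u + t) x = Φ u (Φ t x))
    (hloc : ∀ y ∈ s, ∃ δ > 0, ∀ u ∈ Icc 0 δ, Φ u y ∈ s) {t : ℝ} (ht : 0 ≤ t) :
    MapsTo (Φ t) s s := by
  intro x hx
  suffices Icc 0 t ⊆ {τ | Φ τ x ∈ s} from this ⟨ht, le_rfl⟩
  refine IsClosed.Icc_subset_of_forall_mem_nhdsWithin ?_ ?_ fun τ ⟨hτs, hτ⟩ => ?_
  · rw [inter_comm]
    exact ((hcont x hx).mono Icc_subset_Ici_self).preimage_isClosed_of_isClosed isClosed_Icc hs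
  · obtain ⟨δ, hδ, hδs⟩ := hloc x hx
    exact hδs 0 ⟨le_rfl, hδ.le⟩
  · obtain ⟨δ, hδ, hδs⟩ := hloc _ hτs
    refine Filter.mem_of_superset (Ioo_mem_nhdsGT (lt_add_of_pos_right τ hδ)) fun τ' hτ' => ?_
    have := hδs (τ' - τ) ⟨by linarith [hτ'.1], by linarith [hτ'.2]⟩
    rwa [← hadd x hx τ _ hτ.1 (by linarith [hτ'.1]), sub_add_cancel] at this

theorem IsOpen.exists_pos_forall_Icc_mk_mem {X : Type*} [TopologicalSpace X]
    {U : Set (ℝ × X)} (hU : IsOpen U) {y : X} (hy : ((0 : ℝ), y) ∈ U) :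
    ∃ ε > 0, ∀ τ ∈ Icc 0 ε, (τ, y) ∈ U := by
  have hnhds : {τ : ℝ | (τ, y) ∈ U} ∈ nhds 0 :=
    (continuous_id.prodMk continuous_const).continuousAt.preimage_mem_nhds (hU.mem_nhds hy)
  obtain ⟨r, hr, hball⟩ := Metric.mem_nhds_iff.1 hnhds
  refine ⟨r / 2, half_pos hr, fun τ hτ => hball ?_⟩
  rw [Metric.mem_ball, Real.dist_0_eq_abs, abs_of_nonneg hτ.1]
  linarith [hτ.2]

theorem IsOpen.exists_pos_isIntegralCurveOn_Icc_mapsTo {E : Type*} [NormedAddCommGroup E]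
    [NormedSpace ℝ E] {F : E → E} {φ : ℝ × E → E} {U : Set (ℝ × E)} {s : Set E} (hU : IsOpen U)
    {y : E} (hy : y ∈ s) (hyU : ((0 : ℝ), y) ∈ U) (hφs : ∀ p ∈ U ∩ Ici 0 ×ˢ s, φ p ∈ s)
    (hφ : ∀ t : ℝ, (t, y) ∈ U ∩ Ici 0 ×ˢ s →
      HasDerivWithinAt (fun τ => φ (τ, y)) (F (φ (t, y))) (Ici 0) t) :
    ∃ ε > 0, IsIntegralCurveOn (fun τ => φ (τ, y)) (fun _ => F) (Icc 0 ε) ∧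
      MapsTo (fun τ => φ (τ, y)) (Icc 0 ε) s := by
  obtain ⟨ε, hε, hεU⟩ := hU.exists_pos_forall_Icc_mk_mem hyU
  have hεD (τ : ℝ) (hτ : τ ∈ Icc 0 ε) : (τ, y) ∈ U ∩ Ici 0 ×ˢ s := ⟨hεU τ hτ, hτ.1, hy⟩
  exact ⟨ε, hε, fun τ hτ => (hφ τ (hεD τ hτ)).mono Icc_subset_Ici_self,
    fun τ hτ => hφs _ (hεD τ hτ)⟩

theorem exists_unique_rescaled_semiflow_general {N : ℕ}
    (st gd fs : Set (EuclideanSpace ℝ (Fin N)))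
    (hst : IsCompact st)
    (hfs : fs = st \ gd)
    (F : EuclideanSpace ℝ (Fin N) → EuclideanSpace ℝ (Fin N))
    (L : ℝ) (hF : ∀ x y, ‖F x - F y‖ ≤ L * ‖x - y‖)
    -- a continuous local semiflow `φ` on `fs` with domain `D`,
    -- whose trajectories are integral curves of `F`
    (φ : ℝ × EuclideanSpace ℝ (Fin N) → EuclideanSpace ℝ (Fin N))
    (D : Set (ℝ × EuclideanSpace ℝ (Fin N)))
    (hD_zero : ∀ x ∈ fs, ((0 : ℝ), x) ∈ D)
    (hD_open : ∃ U : Set (ℝ × EuclideanSpace ℝ (Fin N)),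
      IsOpen U ∧ D = U ∩ (Set.Ici (0 : ℝ) ×ˢ fs))
    (hφ_maps : ∀ p ∈ D, φ p ∈ fs)
    (hφ_zero : ∀ x ∈ fs, φ (0, x) = x)
    (hφ_deriv : ∀ x ∈ fs, ∀ t : ℝ, (t, x) ∈ D →
      HasDerivWithinAt (fun τ : ℝ => φ (τ, x)) (F (φ (t, x)))
        (Set.Ici (0 : ℝ)) t)
    -- the rescaling function `α`
    (α : EuclideanSpace ℝ (Fin N) → ℝ) (K : NNReal)
    (hα_lip : LipschitzOnWith K α st)
    (hα_nonneg : ∀ x ∈ st, 0 ≤ α x)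
    (hα_zero : ∀ x ∈ st, (α x = 0 ↔ x ∈ gd)) :
    ∃ Φ : ℝ → EuclideanSpace ℝ (Fin N) → EuclideanSpace ℝ (Fin N),
      IsRescaledSemiflow st α F Φ ∧
      ∀ Ψ : ℝ → EuclideanSpace ℝ (Fin N) → EuclideanSpace ℝ (Fin N),
        IsRescaledSemiflow st α F Ψ →
        ∀ t : ℝ, 0 ≤ t → ∀ x ∈ st, Ψ t x = Φ t x := by
  have hF_lip : LipschitzWith L.toNNReal F :=
    LipschitzWith.of_dist_le' fun x y => by simpa only [dist_eq_norm] using hF x y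
  obtain ⟨G, KG, MG, hG, hGM, hGeq⟩ :=
    hst.exists_lipschitzWith_norm_le_eqOn_smul hα_lip hF_lip.lipschitzOnWith
  obtain ⟨Φ, hΦ⟩ := exists_isForwardFlow hG hGM
  have hloc : ∀ y ∈ st, ∃ δ > 0, ∀ u ∈ Icc 0 δ, Φ u y ∈ st := by
    intro y hy
    by_cases hgy : y ∈ gd
    · have hGy : G y = 0 := (hGeq hy).symm.trans (by simp [(hα_zero y hy).2 hgy])
      exact ⟨1, one_pos, fun u hu => by rwa [hΦ.apply_eq_self_of_eq_zero hG hGy hu.1]⟩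
    have hyfs : y ∈ fs := hfs ▸ ⟨hy, hgy⟩
    obtain ⟨U, hU, rfl⟩ := hD_open
    obtain ⟨ε, hε, hψ, hψfs⟩ := hU.exists_pos_isIntegralCurveOn_Icc_mapsTo hyfs
      (hD_zero y hyfs).1 hφ_maps (hφ_deriv y hyfs)
    simpa [hφ_zero y hyfs] using hΦ.exists_pos_forall_Icc_mem hG hGeq.symm hF_lip.continuous
      hα_lip hα_nonneg hε hψ (hψfs.mono_right (hfs ▸ sdiff_subset))
  have hinv (t : ℝ) (ht : 0 ≤ t) : MapsTo (Φ t) st st :=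
    mapsTo_of_forall_exists_pos_forall_Icc_mem hst.isClosed
      (fun x _ => (hΦ.isIntegralCurveOn x).continuousOn)
      (fun x _ t u ht hu => hΦ.add_apply hG hu ht x) hloc ht
  refine ⟨Φ, ⟨(hΦ.continuousOn_uncurry hG hGM).mono (prod_mono subset_rfl (subset_univ _)),
    fun t ht x hx => hinv t ht hx, fun x _ => hΦ.apply_zero x,
    fun t s ht hs x _ => hΦ.add_apply hG ht hs x, fun x hx t ht => ?_⟩, fun Ψ hΨ t ht x hx => ?_⟩
  · simpa only [hGeq (hinv t ht hx)] using hΦ.isIntegralCurveOn x t ht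
  · obtain ⟨-, hΨst, hΨ₀, -, hΨ'⟩ := hΨ
    simpa [hΨ₀ x hx] using hΦ.eqOn_of_isIntegralCurveOn hG (f := (Ψ · x))
      (fun τ hτ => by simpa only [← hGeq (hΨst τ hτ x hx)] using hΨ' x hx τ hτ) ht

/-- **Existence and uniqueness of the rescaled semiflow `Φ_α` on the state
space `st`.**  Given a compact state space `st ⊆ ℝ^N`, a closed guard set
`gd ⊆ st` with flow set `fs = st \ gd`, a globally Lipschitz vector field `F`
admitting a continuous local semiflow `φ` on `fs` (with derivative `F`), and a
nonnegative Lipschitz function `α` on `st` vanishing precisely on `gd`, there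
is a unique continuous semiflow `Φ_α : [0,∞) × st → st` with
`∂Φ_α/∂t = α(Φ_α)·F(Φ_α)`; in particular `st` is positively invariant under
the flow of `α·F`. -/
theorem exists_unique_rescaled_semiflow {N : ℕ}
    (st gd fs : Set (EuclideanSpace ℝ (Fin N)))
    (hst : IsCompact st) (hgd : IsClosed gd) (hgdsub : gd ⊆ st)
    (hfs : fs = st \ gd)
    (F : EuclideanSpace ℝ (Fin N) → EuclideanSpace ℝ (Fin N))
    (L : ℝ) (hL : 0 ≤ L) (hF : ∀ x y, ‖F x - F y‖ ≤ L * ‖x - y‖)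
    -- a continuous local semiflow `φ` on `fs` with domain `D`,
    -- whose trajectories are integral curves of `F`
    (φ : ℝ × EuclideanSpace ℝ (Fin N) → EuclideanSpace ℝ (Fin N))
    (D : Set (ℝ × EuclideanSpace ℝ (Fin N)))
    (hD_sub : D ⊆ Set.Ici (0 : ℝ) ×ˢ fs)
    (hD_zero : ∀ x ∈ fs, ((0 : ℝ), x) ∈ D)
    (hD_open : ∃ U : Set (ℝ × EuclideanSpace ℝ (Fin N)),
      IsOpen U ∧ D = U ∩ (Set.Ici (0 : ℝ) ×ˢ fs))
    (hφ_cont : ContinuousOn φ D)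
    (hφ_maps : ∀ p ∈ D, φ p ∈ fs)
    (hφ_zero : ∀ x ∈ fs, φ (0, x) = x)
    (hφ_dom : ∀ t s : ℝ, 0 ≤ t → 0 ≤ s → ∀ x ∈ fs,
      ((t + s, x) ∈ D ↔ ((s, x) ∈ D ∧ (t, φ (s, x)) ∈ D)))
    (hφ_semigroup : ∀ t s : ℝ, 0 ≤ t → 0 ≤ s →
      ∀ x, (t + s, x) ∈ D → φ (t + s, x) = φ (t, φ (s, x)))
    (hφ_deriv : ∀ x ∈ fs, ∀ t : ℝ, (t, x) ∈ D →
      HasDerivWithinAt (fun τ : ℝ => φ (τ, x)) (F (φ (t, x)))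
        (Set.Ici (0 : ℝ)) t)
    -- the rescaling function `α`
    (α : EuclideanSpace ℝ (Fin N) → ℝ) (K : NNReal)
    (hα_lip : LipschitzOnWith K α st)
    (hα_nonneg : ∀ x ∈ st, 0 ≤ α x)
    (hα_zero : ∀ x ∈ st, (α x = 0 ↔ x ∈ gd)) :
    ∃ Φ : ℝ → EuclideanSpace ℝ (Fin N) → EuclideanSpace ℝ (Fin N),
      IsRescaledSemiflow st α F Φ ∧
      ∀ Ψ : ℝ → EuclideanSpace ℝ (Fin N) → EuclideanSpace ℝ (Fin N),
        IsRescaledSemiflow st α F Ψ →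
        ∀ t : ℝ, 0 ≤ t → ∀ x ∈ st, Ψ t x = Φ t x :=
  exists_unique_rescaled_semiflow_general st gd fs hst hfs F L hF φ D hD_zero hD_open hφ_maps
    hφ_zero hφ_deriv α K hα_lip hα_nonneg hα_zero
end

section
/- Let st ⊆ ℝ^N be compact, gd ⊆ st compact with fs := st \ gd, let F : ℝ^N → ℝ^N be globally Lipschitz with the closure of {x ∈ fs : F(x) = 0} disjoint from gd, and let α, β : st → [0,∞) be Lipschitz functions with α⁻¹(0) = β⁻¹(0) = gd. Suppose Φ_α, Φ_β : [0,∞) × st → st are continuous semiflows on st whose trajectories are differentiable with ∂Φ_α/∂t(t,x) = α(Φ_α(t,x))·F(Φ_α(t,x)) and ∂Φ_β/∂t(t,x) = β(Φ_β(t,x))·F(Φ_β(t,x)). Define gd to be asymptotically stable for a semiflow Φ on st if (i) for every open set U ⊇ gd there is an open set W ⊇ gd with Φ(t,x) ∈ U for all t ≥ 0 and all x ∈ W ∩ st, and (ii) there is an open set W₀ ⊇ gd such that for every x ∈ W₀ ∩ st the distance from Φ(t,x) to gd tends to 0 as t → ∞. Then gd is asymptotically stable for Φ_α if and only if gd is asymptotically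 stable for Φ_β. -/
open Set Filter Topology

/-- `gd` is asymptotically stable for the semiflow `Φ` on `st`: (i) every open
set `U ⊇ gd` contains the forward orbit of some open set `W ⊇ gd` (intersected
with `st`), and (ii) some open set `W₀ ⊇ gd` is contained in the basin of
attraction of `gd`. -/
def IsAsympStableFor {N : ℕ} (st gd : Set (EuclideanSpace ℝ (Fin N)))
    (Φ : ℝ → EuclideanSpace ℝ (Fin N) → EuclideanSpace ℝ (Fin N)) : Prop :=
  (∀ U : Set (EuclideanSpace ℝ (Fin N)), IsOpen U → gd ⊆ U →
    ∃ W : Set (EuclideanSpace ℝ (Fin N)), IsOpen W ∧ gd ⊆ W ∧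
      ∀ x ∈ W ∩ st, ∀ t : ℝ, 0 ≤ t → Φ t x ∈ U) ∧
  (∃ W₀ : Set (EuclideanSpace ℝ (Fin N)), IsOpen W₀ ∧ gd ⊆ W₀ ∧
    ∀ x ∈ W₀ ∩ st,
      Tendsto (fun t : ℝ => Metric.infDist (Φ t x) gd) atTop (𝓝 0))

/-!
Where `α • F` does not vanish, `β • F = (β / α) • (α • F)` with a positive factor, so by
uniqueness for Lipschitz ODEs a `Φβ`-trajectory is the `Φα`-trajectory from the same point run
with the time change `σ t = ∫₀ᵗ (β / α) (Φβ r x) dr`. This time change is unbounded: otherwise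
the `Φβ`-trajectory would converge to a point of the `Φα`-trajectory, which must be an
equilibrium, and a trajectory that reaches an equilibrium is constant. Hence every `Φβ`-trajectory
is a reparametrisation of a `Φα`-trajectory by a time change tending to infinity, which transports
both stability and attraction.
-/

open scoped NNReal

theorem LipschitzOnWith.smul_of_isCompact {X 𝕜 E : Type*} [PseudoMetricSpace X] [NormedField 𝕜]
    [SeminormedAddCommGroup E] [NormedSpace 𝕜 E] {s : Set X} (hs : IsCompact s)
    {f : X → 𝕜} {g : X → E} {Kf Kg : ℝ≥0} (hf : LipschitzOnWith Kf f s)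
    (hg : LipschitzOnWith Kg g s) : ∃ K, LipschitzOnWith K (fun x => f x • g x) s := by
  obtain ⟨A, hA⟩ := hs.exists_bound_of_continuousOn hf.continuousOn
  obtain ⟨B, hB⟩ := hs.exists_bound_of_continuousOn hg.continuousOn
  refine ⟨A.toNNReal * Kg + Kf * B.toNNReal, LipschitzOnWith.of_dist_le_mul fun x hx y hy => ?_⟩
  have hfx : ‖f x‖ ≤ (A.toNNReal : ℝ) := (hA x hx).trans (Real.le_coe_toNNReal A)
  have hgy : ‖g y‖ ≤ (B.toNNReal : ℝ) := (hB y hy).trans (Real.le_coe_toNNReal B)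
  calc dist (f x • g x) (f y • g y) = ‖f x • (g x - g y) + (f x - f y) • g y‖ := by
        rw [dist_eq_norm, smul_sub, sub_smul, sub_add_sub_cancel]
    _ ≤ ‖f x‖ * ‖g x - g y‖ + ‖f x - f y‖ * ‖g y‖ :=
        (norm_add_le _ _).trans_eq (by rw [norm_smul, norm_smul])
    _ ≤ A.toNNReal * (Kg * dist x y) + Kf * dist x y * B.toNNReal := by
        rw [← dist_eq_norm, ← dist_eq_norm]
        gcongr
        exacts [hg.dist_le_mul x hx y hy, hf.dist_le_mul x hx y hy]
    _ = ↑(A.toNNReal * Kg + Kf * B.toNNReal) * dist x y := by push_cast; ring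

section ForwardSolution

variable {E : Type*} [NormedAddCommGroup E] [NormedSpace ℝ E]

theorem eq_zero_of_tendsto_of_hasDerivAt {f f' : ℝ → E} {y w : E}
    (hf : Tendsto f atTop (𝓝 y)) (hf' : Tendsto f' atTop (𝓝 w))
    (hderiv : ∀ᶠ t in atTop, HasDerivAt f (f' t) t) : w = 0 := by
  -- The increments `f (t + 1) - f t` tend to `0`, and by the mean value inequality to `w`.
  have hinc : Tendsto (fun t => f (t + 1) - f t - w) atTop (𝓝 (-w)) := by
    simpa using ((hf.comp (tendsto_atTop_add_const_right _ 1 tendsto_id)).sub hf).sub_const w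
  refine norm_le_zero_iff.1 (le_of_forall_pos_le_add fun ε hε => ?_)
  have hclose : ∀ᶠ t in atTop, ‖f' t - w‖ ≤ ε :=
    (tendsto_iff_norm_sub_tendsto_zero.1 hf').eventually (ge_mem_nhds hε)
  obtain ⟨R, hR⟩ := eventually_atTop.1 (hderiv.and hclose)
  have hstep : ∀ᶠ t in atTop, ‖f (t + 1) - f t - w‖ ≤ ε := by
    filter_upwards [eventually_ge_atTop R] with t ht
    have hmv := norm_image_sub_le_of_norm_deriv_le_segment' (f := fun r => f r - r • w)
      (fun r hr => ((hR r (ht.trans hr.1)).1.sub ((hasDerivAt_id r).smul_const w)).hasDerivWithinAt)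
      (fun r hr => by simpa using (hR r (ht.trans hr.1)).2) (t + 1) (right_mem_Icc.2 (by linarith))
    simpa [add_smul, sub_sub, add_comm, add_left_comm, add_assoc] using hmv
  simpa using le_of_tendsto hinc.norm hstep

def IsForwardSolution (v : E → E) (s : Set E) (γ : ℝ → E) : Prop :=
  ∀ t, 0 ≤ t → γ t ∈ s ∧ HasDerivWithinAt γ (v (γ t)) (Ici 0) t

variable {v : E → E} {s : Set E} {γ : ℝ → E} {K : ℝ≥0}

namespace IsForwardSolution

theorem continuousOn (hγ : IsForwardSolution v s γ) : ContinuousOn γ (Ici 0) :=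
  fun t ht => (hγ t ht).2.continuousWithinAt

theorem hasDerivAt (hγ : IsForwardSolution v s γ) {t : ℝ} (ht : 0 < t) :
    HasDerivAt γ (v (γ t)) t :=
  (hγ t ht.le).2.hasDerivAt (Ici_mem_nhds ht)

theorem apply_eq_zero_of_tendsto (hv : ContinuousOn v s) (hγ : IsForwardSolution v s γ) {y : E}
    (hy : y ∈ s) (hlim : Tendsto γ atTop (𝓝 y)) : v y = 0 := by
  refine eq_zero_of_tendsto_of_hasDerivAt hlim ?_
    ((eventually_gt_atTop 0).mono fun t ht => hγ.hasDerivAt ht)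
  exact (hv y hy).tendsto.comp (tendsto_nhdsWithin_iff.2
    ⟨hlim, (eventually_ge_atTop 0).mono fun t ht => (hγ t ht).1⟩)

theorem apply_eq_of_equilibrium (hv : LipschitzOnWith K v s) (hγ : IsForwardSolution v s γ)
    {z : E} (hz : v z = 0) {T : ℝ} (hT : 0 ≤ T) (hγT : γ T = z) : ∀ t, 0 ≤ t → γ t = z := by
  have hzs : z ∈ s := hγT ▸ (hγ T hT).1
  have hconst : ∀ (r : ℝ) (I : Set ℝ), HasDerivWithinAt (fun _ => z) (v z) I r := fun r I => by
    simpa [hz] using hasDerivWithinAt_const r I z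
  intro t ht
  rcases le_total T t with hTt | htT
  · refine ODE_solution_unique_of_mem_Icc_right (v := fun _ => v) (s := fun _ => s)
      (fun _ _ => hv) (hγ.continuousOn.mono fun r hr => hT.trans hr.1)
      (fun r hr => (hγ r (hT.trans hr.1)).2.mono (Ici_subset_Ici.2 (hT.trans hr.1)))
      (fun r hr => (hγ r (hT.trans hr.1)).1) continuousOn_const (fun r _ => hconst r _)
      (fun _ _ => hzs) hγT ⟨hTt, le_rfl⟩
  · refine ODE_solution_unique_of_mem_Icc_left (v := fun _ => v) (s := fun _ => s)
      (fun _ _ => hv) (hγ.continuousOn.mono fun r hr => ht.trans hr.1)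
      (fun r hr => (hγ.hasDerivAt (ht.trans_lt hr.1)).hasDerivWithinAt)
      (fun r hr => (hγ r (ht.trans hr.1.le)).1) continuousOn_const (fun r _ => hconst r _)
      (fun _ _ => hzs) hγT ⟨le_rfl, htT⟩

theorem eqOn_comp_of_hasDerivAt_smul (hv : LipschitzOnWith K v s) (hγ : IsForwardSolution v s γ)
    {c σ : ℝ → ℝ} (hc : Continuous c) (hσ : ∀ r, HasDerivAt σ (c r) r)
    (hσ_nonneg : MapsTo σ (Ici 0) (Ici 0)) {η : ℝ → E}
    (hη : ∀ r, 0 ≤ r → η r ∈ s ∧ HasDerivWithinAt η (c r • v (η r)) (Ici 0) r)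
    (h0 : η 0 = γ (σ 0)) : EqOn η (γ ∘ σ) (Ici 0) := by
  intro t ht
  obtain ⟨C, hC⟩ := isCompact_Icc.exists_bound_of_continuousOn (hc.continuousOn (s := Icc 0 t))
  have hw : ∀ r ∈ Ico 0 t, LipschitzOnWith (C.toNNReal * K) (fun z => c r • v z) s :=
    fun r hr => ((lipschitzWith_smul (c r)).comp_lipschitzOnWith hv).weaken <|
      mul_le_mul_left (NNReal.le_toNNReal_of_coe_le (hC r (Ico_subset_Icc_self hr))) K
  have hσc : Continuous σ := continuous_iff_continuousAt.2 fun r => (hσ r).continuousAt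
  exact ODE_solution_unique_of_mem_Icc_right (v := fun r z => c r • v z) (s := fun _ => s) hw
    (fun r hr => (hη r hr.1).2.continuousWithinAt.mono Icc_subset_Ici_self)
    (fun r hr => (hη r hr.1).2.mono (Ici_subset_Ici.2 hr.1)) (fun r hr => (hη r hr.1).1)
    (hγ.continuousOn.comp hσc.continuousOn fun r hr => hσ_nonneg hr.1)
    (fun r hr => (hγ (σ r) (hσ_nonneg hr.1)).2.scomp r (hσ r).hasDerivWithinAt
      fun u hu => hσ_nonneg (hr.1.trans hu))
    (fun r hr => (hγ (σ r) (hσ_nonneg hr.1)).1) h0 ⟨ht, le_rfl⟩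

theorem tendsto_atTop_of_eqOn_comp {w : E → E} {η : ℝ → E} {σ : ℝ → ℝ}
    (hv : LipschitzOnWith K v s) (hw : ContinuousOn w s) (hvw : ∀ z ∈ s, w z = 0 → v z = 0)
    (hγ : IsForwardSolution v s γ) (hγ0 : v (γ 0) ≠ 0) (hη : IsForwardSolution w s η)
    (hσ : Monotone σ) (hσ_nonneg : MapsTo σ (Ici 0) (Ici 0)) (hησ : EqOn η (γ ∘ σ) (Ici 0)) :
    Tendsto σ atTop atTop := by
  refine tendsto_atTop_atTop_of_monotone' hσ fun hbdd => hγ0 ?_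
  -- A bounded time change converges, so `η` converges to a point of `γ`, necessarily an equilibrium.
  set T := ⨆ t, σ t
  have hT : 0 ≤ T := hσ_nonneg (le_refl (0 : ℝ)) |>.trans (le_ciSup hbdd 0)
  have hσT : Tendsto σ atTop (𝓝[Ici 0] T) := tendsto_nhdsWithin_iff.2
    ⟨tendsto_atTop_ciSup hσ hbdd, (eventually_ge_atTop 0).mono fun t ht => hσ_nonneg ht⟩
  have hηT : Tendsto η atTop (𝓝 (γ T)) :=
    ((hγ.continuousOn T hT).tendsto.comp hσT).congr'
      ((eventually_ge_atTop 0).mono fun t ht => (hησ ht).symm)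
  have hγT : v (γ T) = 0 := hvw _ (hγ T hT).1 (hη.apply_eq_zero_of_tendsto hw (hγ T hT).1 hηT)
  rw [hγ.apply_eq_of_equilibrium hv hγT hT rfl 0 le_rfl, hγT]

theorem exists_timeChange_of_rescaling {α β : E → ℝ} {F : E → E} {Kα Kβ : ℝ≥0}
    (hvα : LipschitzOnWith Kα (fun z => α z • F z) s)
    (hvβ : LipschitzOnWith Kβ (fun z => β z • F z) s)
    (hα : ContinuousOn α s) (hβ : ContinuousOn β s)
    (hα_nonneg : ∀ z ∈ s, 0 ≤ α z) (hβ_nonneg : ∀ z ∈ s, 0 ≤ β z)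
    (hαβ : ∀ z ∈ s, α z = 0 ↔ β z = 0) {γ η : ℝ → E}
    (hγ : IsForwardSolution (fun z => α z • F z) s γ)
    (hη : IsForwardSolution (fun z => β z • F z) s η) (h0 : η 0 = γ 0) :
    ∃ σ : ℝ → ℝ, MapsTo σ (Ici 0) (Ici 0) ∧ Tendsto σ atTop atTop ∧ EqOn η (γ ∘ σ) (Ici 0) := by
  have hequil : ∀ z ∈ s, β z • F z = 0 ↔ α z • F z = 0 := fun z hz => by
    simp only [smul_eq_zero, hαβ z hz]
  by_cases hx : α (γ 0) • F (γ 0) = 0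
  · have hγx := hγ.apply_eq_of_equilibrium hvα hx le_rfl rfl
    have hηx := hη.apply_eq_of_equilibrium hvβ ((hequil _ (hγ 0 le_rfl).1).2 hx) le_rfl h0
    exact ⟨id, fun _ => id, tendsto_id, fun t ht => (hηx t ht).trans (hγx t ht).symm⟩
  have hα_ne : ∀ r, 0 ≤ r → α (η r) ≠ 0 := fun r hr hαr => hx <| by
    have hηr : β (η r) • F (η r) = 0 := by simp [(hαβ _ (hη r hr).1).1 hαr]
    rw [← h0, hη.apply_eq_of_equilibrium hvβ hηr hr rfl 0 le_rfl, hαr, zero_smul]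
  have hβ_ne : ∀ r, 0 ≤ r → β (η r) ≠ 0 := fun r hr => (hαβ _ (hη r hr).1).not.1 (hα_ne r hr)
  -- the speed ratio `β / α` along `η`, extended to negative times as a constant
  set c : ℝ → ℝ := fun r => β (η (max r 0)) / α (η (max r 0)) with hc_def
  have hηc : Continuous fun r => η (max r 0) :=
    hη.continuousOn.comp_continuous (continuous_id.max continuous_const) fun r => le_max_right r 0
  have hηs : ∀ r, η (max r 0) ∈ s := fun r => (hη _ (le_max_right r 0)).1
  have hc : Continuous c := (hβ.comp_continuous hηc hηs).div (hα.comp_continuous hηc hηs)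
    fun r => hα_ne _ (le_max_right r 0)
  have hc_pos : ∀ r, 0 < c r := fun r =>
    div_pos ((hβ_nonneg _ (hηs r)).lt_of_ne (hβ_ne _ (le_max_right r 0)).symm)
      ((hα_nonneg _ (hηs r)).lt_of_ne (hα_ne _ (le_max_right r 0)).symm)
  set σ : ℝ → ℝ := fun t => ∫ r in (0 : ℝ)..t, c r
  have hσ : ∀ r, HasDerivAt σ (c r) r := fun r => (hc.integral_hasStrictDerivAt 0 r).hasDerivAt
  have hσ_mono : Monotone σ := monotone_of_hasDerivAt_nonneg hσ fun r => (hc_pos r).le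
  have hσ0 : σ 0 = 0 := intervalIntegral.integral_same
  have hσ_nonneg : MapsTo σ (Ici 0) (Ici 0) := fun t (ht : 0 ≤ t) => hσ0 ▸ hσ_mono ht
  have hη' : ∀ r, 0 ≤ r → η r ∈ s ∧
      HasDerivWithinAt η (c r • (α (η r) • F (η r))) (Ici 0) r := fun r hr => by
    refine ⟨(hη r hr).1, ?_⟩
    rw [show c r = β (η r) / α (η r) by simp only [hc_def, max_eq_left hr], smul_smul,
      div_mul_cancel₀ _ (hα_ne r hr)]
    exact (hη r hr).2
  have hησ : EqOn η (γ ∘ σ) (Ici 0) :=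
    hγ.eqOn_comp_of_hasDerivAt_smul hvα hc hσ hσ_nonneg hη' (by rw [hσ0, h0])
  exact ⟨σ, hσ_nonneg, hγ.tendsto_atTop_of_eqOn_comp hvα hvβ.continuousOn
    (fun z hz => (hequil z hz).1) hx hη hσ_mono hσ_nonneg hησ, hησ⟩

end IsForwardSolution

end ForwardSolution

theorem IsAsympStableFor.of_timeChange {N : ℕ} {st gd : Set (EuclideanSpace ℝ (Fin N))}
    {Φ Ψ : ℝ → EuclideanSpace ℝ (Fin N) → EuclideanSpace ℝ (Fin N)}
    (h : ∀ x ∈ st, ∃ σ : ℝ → ℝ, MapsTo σ (Ici 0) (Ici 0) ∧ Tendsto σ atTop atTop ∧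
      EqOn (Ψ · x) ((Φ · x) ∘ σ) (Ici 0))
    (hΦ : IsAsympStableFor st gd Φ) : IsAsympStableFor st gd Ψ := by
  obtain ⟨hstable, W₀, hW₀, hgdW₀, hattract⟩ := hΦ
  refine ⟨fun U hU hgdU => ?_, W₀, hW₀, hgdW₀, fun x hx => ?_⟩
  · obtain ⟨W, hW, hgdW, hWU⟩ := hstable U hU hgdU
    refine ⟨W, hW, hgdW, fun x hx t ht => ?_⟩
    obtain ⟨σ, hσ_nonneg, -, hΨ⟩ := h x hx.2
    rw [show Ψ t x = Φ (σ t) x from hΨ (mem_Ici.2 ht)]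
    exact hWU x hx _ (hσ_nonneg (mem_Ici.2 ht))
  · obtain ⟨σ, -, hσ, hΨ⟩ := h x hx.2
    exact ((hattract x hx).comp hσ).congr' <|
      (eventually_ge_atTop 0).mono fun t ht => by simp only [Function.comp, hΨ (mem_Ici.2 ht)]

theorem asympStable_independent_of_rescaling_general {N : ℕ}
    (st gd : Set (EuclideanSpace ℝ (Fin N)))
    (hst : IsCompact st)
    (F : EuclideanSpace ℝ (Fin N) → EuclideanSpace ℝ (Fin N))
    (L : ℝ) (hF : ∀ x y, ‖F x - F y‖ ≤ L * ‖x - y‖)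
    (α β : EuclideanSpace ℝ (Fin N) → ℝ) (Kα Kβ : NNReal)
    (hα_lip : LipschitzOnWith Kα α st) (hβ_lip : LipschitzOnWith Kβ β st)
    (hα_nonneg : ∀ x ∈ st, 0 ≤ α x) (hβ_nonneg : ∀ x ∈ st, 0 ≤ β x)
    (hα_zero : ∀ x ∈ st, (α x = 0 ↔ x ∈ gd))
    (hβ_zero : ∀ x ∈ st, (β x = 0 ↔ x ∈ gd))
    (Φα Φβ : ℝ → EuclideanSpace ℝ (Fin N) → EuclideanSpace ℝ (Fin N))
    (hΦα_maps : ∀ t : ℝ, 0 ≤ t → ∀ x ∈ st, Φα t x ∈ st)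
    (hΦα_zero : ∀ x ∈ st, Φα 0 x = x)
    (hΦα_deriv : ∀ x ∈ st, ∀ t : ℝ, 0 ≤ t →
      HasDerivWithinAt (fun τ : ℝ => Φα τ x) (α (Φα t x) • F (Φα t x))
        (Set.Ici (0 : ℝ)) t)
    (hΦβ_maps : ∀ t : ℝ, 0 ≤ t → ∀ x ∈ st, Φβ t x ∈ st)
    (hΦβ_zero : ∀ x ∈ st, Φβ 0 x = x)
    (hΦβ_deriv : ∀ x ∈ st, ∀ t : ℝ, 0 ≤ t →
      HasDerivWithinAt (fun τ : ℝ => Φβ τ x) (β (Φβ t x) • F (Φβ t x))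
        (Set.Ici (0 : ℝ)) t) :
    IsAsympStableFor st gd Φα ↔ IsAsympStableFor st gd Φβ := by
  have hF_lip : LipschitzOnWith L.toNNReal F st :=
    (LipschitzWith.of_dist_le' fun x y => by simpa only [dist_eq_norm] using hF x y).lipschitzOnWith
  obtain ⟨Mα, hvα⟩ := hα_lip.smul_of_isCompact hst hF_lip
  obtain ⟨Mβ, hvβ⟩ := hβ_lip.smul_of_isCompact hst hF_lip
  have hαβ : ∀ x ∈ st, α x = 0 ↔ β x = 0 := fun x hx => (hα_zero x hx).trans (hβ_zero x hx).symm
  have hsolα : ∀ x ∈ st, IsForwardSolution (fun z => α z • F z) st (Φα · x) :=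
    fun x hx t ht => ⟨hΦα_maps t ht x hx, hΦα_deriv x hx t ht⟩
  have hsolβ : ∀ x ∈ st, IsForwardSolution (fun z => β z • F z) st (Φβ · x) :=
    fun x hx t ht => ⟨hΦβ_maps t ht x hx, hΦβ_deriv x hx t ht⟩
  refine ⟨IsAsympStableFor.of_timeChange fun x hx => ?_, IsAsympStableFor.of_timeChange fun x hx => ?_⟩
  · exact (hsolα x hx).exists_timeChange_of_rescaling hvα hvβ hα_lip.continuousOn hβ_lip.continuousOn
      hα_nonneg hβ_nonneg hαβ (hsolβ x hx) (by rw [hΦα_zero x hx, hΦβ_zero x hx])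
  · exact (hsolβ x hx).exists_timeChange_of_rescaling hvβ hvα hβ_lip.continuousOn hα_lip.continuousOn
      hβ_nonneg hα_nonneg (fun z hz => (hαβ z hz).symm) (hsolα x hx)
      (by rw [hΦα_zero x hx, hΦβ_zero x hx])

/-- **Independence of the inflowing condition from the rescaling.**  Let
`gd ⊆ st ⊆ ℝ^N` be compact, `fs = st \ gd`, `F` globally Lipschitz with the
closure of its zero set in `fs` disjoint from `gd`, and let `α, β` be
nonnegative Lipschitz functions on `st` vanishing precisely on `gd`, with
associated rescaled semiflows `Φ_α`, `Φ_β` on `st`.  Then `gd` is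
asymptotically stable for `Φ_α` iff it is asymptotically stable for `Φ_β`. -/
theorem asympStable_independent_of_rescaling {N : ℕ}
    (st gd fs : Set (EuclideanSpace ℝ (Fin N)))
    (hst : IsCompact st) (hgd : IsCompact gd) (hgdsub : gd ⊆ st)
    (hfs : fs = st \ gd)
    (F : EuclideanSpace ℝ (Fin N) → EuclideanSpace ℝ (Fin N))
    (L : ℝ) (hL : 0 ≤ L) (hF : ∀ x y, ‖F x - F y‖ ≤ L * ‖x - y‖)
    (hdisj : Disjoint (closure {x ∈ fs | F x = 0}) gd)
    (α β : EuclideanSpace ℝ (Fin N) → ℝ) (Kα Kβ : NNReal)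
    (hα_lip : LipschitzOnWith Kα α st) (hβ_lip : LipschitzOnWith Kβ β st)
    (hα_nonneg : ∀ x ∈ st, 0 ≤ α x) (hβ_nonneg : ∀ x ∈ st, 0 ≤ β x)
    (hα_zero : ∀ x ∈ st, (α x = 0 ↔ x ∈ gd))
    (hβ_zero : ∀ x ∈ st, (β x = 0 ↔ x ∈ gd))
    (Φα Φβ : ℝ → EuclideanSpace ℝ (Fin N) → EuclideanSpace ℝ (Fin N))
    -- `Φα` is a continuous semiflow on `st`
    (hΦα_cont : ContinuousOn (fun p : ℝ × EuclideanSpace ℝ (Fin N) => Φα p.1 p.2)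
      (Set.Ici (0 : ℝ) ×ˢ st))
    (hΦα_maps : ∀ t : ℝ, 0 ≤ t → ∀ x ∈ st, Φα t x ∈ st)
    (hΦα_zero : ∀ x ∈ st, Φα 0 x = x)
    (hΦα_semigroup : ∀ t s : ℝ, 0 ≤ t → 0 ≤ s → ∀ x ∈ st,
      Φα (t + s) x = Φα t (Φα s x))
    (hΦα_deriv : ∀ x ∈ st, ∀ t : ℝ, 0 ≤ t →
      HasDerivWithinAt (fun τ : ℝ => Φα τ x) (α (Φα t x) • F (Φα t x))
        (Set.Ici (0 : ℝ)) t)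
    -- `Φβ` is a continuous semiflow on `st`
    (hΦβ_cont : ContinuousOn (fun p : ℝ × EuclideanSpace ℝ (Fin N) => Φβ p.1 p.2)
      (Set.Ici (0 : ℝ) ×ˢ st))
    (hΦβ_maps : ∀ t : ℝ, 0 ≤ t → ∀ x ∈ st, Φβ t x ∈ st)
    (hΦβ_zero : ∀ x ∈ st, Φβ 0 x = x)
    (hΦβ_semigroup : ∀ t s : ℝ, 0 ≤ t → 0 ≤ s → ∀ x ∈ st,
      Φβ (t + s) x = Φβ t (Φβ s x))
    (hΦβ_deriv : ∀ x ∈ st, ∀ t : ℝ, 0 ≤ t →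
      HasDerivWithinAt (fun τ : ℝ => Φβ τ x) (β (Φβ t x) • F (Φβ t x))
        (Set.Ici (0 : ℝ)) t) :
    IsAsympStableFor st gd Φα ↔ IsAsympStableFor st gd Φβ :=
  asympStable_independent_of_rescaling_general st gd hst F L hF α β Kα Kβ hα_lip hβ_lip hα_nonneg
    hβ_nonneg hα_zero hβ_zero Φα Φβ hΦα_maps hΦα_zero hΦα_deriv hΦβ_maps hΦβ_zero hΦβ_deriv
end

section
/- Let S be a compact metric space, let Φ : [0,∞) × S → S be a continuous semiflow, and let A ⊆ S be a compact set that is asymptotically stable for Φ, i.e., (i) for every open set U ⊇ A there is an open set W with A ⊆ W ⊆ S such that Φ(t,x) ∈ U for all t ≥ 0 and x ∈ W, and (ii) there is an open set W₀ ⊇ A such that dist(Φ(t,x), A) → 0 as t → ∞ for every x ∈ W₀. Then there exists a compact set V ⊆ S that is a neighborhood of A in S and satisfies Φ(t, V) ⊆ interior(V) for every t > 0. -/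
/-!
Fix a strictly decreasing `r` bounded below by some `ρ > 0`, and let `V` be the set of points
whose orbit satisfies `infDist (Φ s x) A ≤ r s` for all `s ≥ 0`; it is closed, hence compact.
Since `r` decreases strictly, `Φ t` with `t > 0` maps `V` into the set `O` of points of the basin
for which all these inequalities are strict. `O` is open: an orbit in the basin enters at some
time `T` a neighbourhood of `A` from which stability keeps it within `ρ` of `A`, so only the
compact time interval `[0, T]` matters, and there the tube lemma applies.
-/

open Set Filter Topology Metric

section Semiflow

variable {S : Type*}

section Topological

variable [TopologicalSpace S]

def IsLyapunovStable (Φ : ℝ → S → S) (A : Set S) : Prop :=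
  ∀ U : Set S, IsOpen U → A ⊆ U →
    ∃ W : Set S, IsOpen W ∧ A ⊆ W ∧ ∀ x ∈ W, ∀ t : ℝ, 0 ≤ t → Φ t x ∈ U

variable {Φ : ℝ → S → S} {A : Set S}

theorem continuous_flow_of_nonneg
    (hΦ : ContinuousOn (fun p : ℝ × S => Φ p.1 p.2) (Ici 0 ×ˢ univ)) {t : ℝ} (ht : 0 ≤ t) :
    Continuous (Φ t) :=
  hΦ.comp_continuous (Continuous.prodMk_right t) fun _ => ⟨ht, trivial⟩

theorem continuous_flow_max_zero
    (hΦ : ContinuousOn (fun p : ℝ × S => Φ p.1 p.2) (Ici 0 ×ˢ univ)) :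
    Continuous fun p : ℝ × S => Φ (max p.1 0) p.2 :=
  hΦ.comp_continuous ((continuous_fst.max continuous_const).prodMk continuous_snd)
    fun _ => ⟨mem_Ici.2 (le_max_right _ _), trivial⟩

theorem IsLyapunovStable.flow_mem [T1Space S]
    (hstab : IsLyapunovStable Φ A)
    {x : S} (hx : x ∈ A) {t : ℝ} (ht : 0 ≤ t) : Φ t x ∈ A := by
  by_contra hxt
  obtain ⟨W, -, hAW, hW⟩ := hstab {Φ t x}ᶜ isClosed_singleton.isOpen_compl
    fun a ha hat => hxt (hat ▸ ha)
  exact hW x (hAW hx) t ht rfl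

end Topological

variable [MetricSpace S] {Φ : ℝ → S → S} {A : Set S}

theorem eventually_forall_Icc_infDist_flow_lt
    (hΦ : ContinuousOn (fun p : ℝ × S => Φ p.1 p.2) (Ici 0 ×ˢ univ))
    {r : ℝ → ℝ} (hr : Continuous r) {x : S} {T : ℝ}
    (hx : ∀ s ∈ Icc 0 T, infDist (Φ s x) A < r s) :
    ∀ᶠ z in 𝓝 x, ∀ s ∈ Icc 0 T, infDist (Φ s z) A < r s := by
  have hdist : Continuous fun p : S × ℝ => infDist (Φ (max p.2 0) p.1) A :=
    (continuous_infDist_pt A).comp ((continuous_flow_max_zero hΦ).comp continuous_swap)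
  have hmax : ∀ᶠ z in 𝓝 x, ∀ s ∈ Icc 0 T, infDist (Φ (max s 0) z) A < r s :=
    isCompact_Icc.eventually_forall_of_forall_eventually fun s hs =>
      hdist.continuousAt.eventually_lt (hr.comp continuous_snd).continuousAt
        (by simpa [max_eq_left hs.1] using hx s hs)
  filter_upwards [hmax] with z hz s hs
  simpa [max_eq_left hs.1] using hz s hs

theorem isOpen_inter_setOf_forall_infDist_flow_lt
    (hΦ : ContinuousOn (fun p : ℝ × S => Φ p.1 p.2) (Ici 0 ×ˢ univ))
    (hΦ_semigroup : ∀ t s : ℝ, 0 ≤ t → 0 ≤ s → ∀ x : S, Φ (t + s) x = Φ t (Φ s x))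
    (hstab : IsLyapunovStable Φ A)
    {W₀ : Set S} (hW₀ : IsOpen W₀) (hattr : ∀ x ∈ W₀, Tendsto (Φ · x) atTop (𝓝ˢ A))
    {r : ℝ → ℝ} (hr : Continuous r) {ρ : ℝ} (hρr : ∀ s, ρ ≤ r s) (hρ : 0 < ρ) :
    IsOpen (W₀ ∩ {x | ∀ s, 0 ≤ s → infDist (Φ s x) A < r s}) := by
  obtain ⟨W, hW, hAW, hWρ⟩ := hstab {y | infDist y A < ρ}
    (isOpen_lt (continuous_infDist_pt A) continuous_const)
    fun a ha => by simpa [infDist_zero_of_mem ha] using hρ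
  refine isOpen_iff_mem_nhds.2 fun x ⟨hxW₀, hx⟩ => ?_
  obtain ⟨T, hTW, hT⟩ := (((hattr x hxW₀).eventually (hW.mem_nhdsSet.2 hAW)).and
    (eventually_ge_atTop 0)).exists
  have hTz : ∀ᶠ z in 𝓝 x, Φ T z ∈ W :=
    (continuous_flow_of_nonneg hΦ hT).continuousAt.preimage_mem_nhds (hW.mem_nhds hTW)
  filter_upwards [hW₀.mem_nhds hxW₀, hTz,
    eventually_forall_Icc_infDist_flow_lt hΦ hr fun s hs => hx s hs.1] with z hzW₀ hzT hz
  refine ⟨hzW₀, fun s hs => ?_⟩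
  rcases le_total s T with hsT | hTs
  · exact hz s ⟨hs, hsT⟩
  · rw [show Φ s z = Φ (s - T) (Φ T z) by
      rw [← hΦ_semigroup _ _ (sub_nonneg.2 hTs) hT, sub_add_cancel]]
    exact (hWρ _ hzT _ (sub_nonneg.2 hTs)).trans_le (hρr s)

theorem isClosed_setOf_forall_infDist_flow_le
    (hΦ : ContinuousOn (fun p : ℝ × S => Φ p.1 p.2) (Ici 0 ×ˢ univ)) (r : ℝ → ℝ) :
    IsClosed {x | ∀ s, 0 ≤ s → infDist (Φ s x) A ≤ r s} := by
  simp only [ofPred_forall]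
  exact isClosed_iInter fun s => isClosed_iInter fun hs =>
    isClosed_le ((continuous_infDist_pt A).comp (continuous_flow_of_nonneg hΦ hs))
      continuous_const

theorem infDist_flow_flow_lt
    (hΦ_semigroup : ∀ t s : ℝ, 0 ≤ t → 0 ≤ s → ∀ x : S, Φ (t + s) x = Φ t (Φ s x))
    {r : ℝ → ℝ} (hr : StrictAnti r) {x : S} (hx : ∀ s, 0 ≤ s → infDist (Φ s x) A ≤ r s)
    {t : ℝ} (ht : 0 < t) {s : ℝ} (hs : 0 ≤ s) : infDist (Φ s (Φ t x)) A < r s := by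
  rw [← hΦ_semigroup s t hs ht.le]
  exact (hx _ (by positivity)).trans_lt (hr (lt_add_of_pos_right s ht))

end Semiflow

theorem exists_compact_attracting_nbhd_general {S : Type*} [MetricSpace S] [CompactSpace S]
    (Φ : ℝ → S → S)
    (hΦ_cont : ContinuousOn (fun p : ℝ × S => Φ p.1 p.2)
      (Set.Ici (0 : ℝ) ×ˢ (Set.univ : Set S)))
    (hΦ_semigroup : ∀ t s : ℝ, 0 ≤ t → 0 ≤ s → ∀ x : S,
      Φ (t + s) x = Φ t (Φ s x))
    (A : Set S) (hA : IsCompact A)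
    -- (i) stability
    (hstab : ∀ U : Set S, IsOpen U → A ⊆ U →
      ∃ W : Set S, IsOpen W ∧ A ⊆ W ∧ ∀ x ∈ W, ∀ t : ℝ, 0 ≤ t → Φ t x ∈ U)
    -- (ii) local attractivity
    (hattr : ∃ W₀ : Set S, IsOpen W₀ ∧ A ⊆ W₀ ∧ ∀ x ∈ W₀,
      Tendsto (fun t : ℝ => Metric.infDist (Φ t x) A) atTop (𝓝 0)) :
    ∃ V : Set S, IsCompact V ∧ A ⊆ interior V ∧
      ∀ t : ℝ, 0 < t → ∀ x ∈ V, Φ t x ∈ interior V := by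
  rcases A.eq_empty_or_nonempty with rfl | hne
  · exact ⟨∅, isCompact_empty, empty_subset _, fun _ _ _ hx => hx.elim⟩
  obtain ⟨W₀, hW₀, hAW₀, hattr⟩ := hattr
  obtain ⟨ρ, hρ, hρW₀⟩ := hA.exists_thickening_subset_open hW₀ hAW₀
  set r : ℝ → ℝ := fun s => ρ / 2 * (1 + Real.exp (-s))
  have hr : StrictAnti r := fun s t hst => by
    have := Real.exp_lt_exp.2 (neg_lt_neg hst)
    simp only [r]; gcongr
  set V := {x | ∀ s, 0 ≤ s → infDist (Φ s x) A ≤ r s}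
  set O := W₀ ∩ {x | ∀ s, 0 ≤ s → infDist (Φ s x) A < r s}
  have hbasin : ∀ x ∈ W₀, Tendsto (Φ · x) atTop (𝓝ˢ A) := fun x hx =>
    (tendsto_nhdsSet hA hne).2 fun ε hε => (hattr x hx).eventually (gt_mem_nhds hε)
  have hρr : ∀ s, ρ / 2 ≤ r s := fun s =>
    le_mul_of_one_le_right (half_pos hρ).le (le_add_of_nonneg_right (Real.exp_pos _).le)
  have hO : IsOpen O := isOpen_inter_setOf_forall_infDist_flow_lt hΦ_cont hΦ_semigroup hstab
    hW₀ hbasin (by fun_prop) hρr (half_pos hρ)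
  have hOV : O ⊆ interior V := interior_maximal (fun x hx s hs => (hx.2 s hs).le) hO
  have hAO : A ⊆ O := fun a ha => ⟨hAW₀ ha, fun s hs => by
    rw [infDist_zero_of_mem (IsLyapunovStable.flow_mem hstab ha hs)]; positivity⟩
  refine ⟨V, (isClosed_setOf_forall_infDist_flow_le hΦ_cont r).isCompact, hAO.trans hOV,
    fun t ht x hx => hOV ⟨hρW₀ ?_, fun s hs => infDist_flow_flow_lt hΦ_semigroup hr hx ht hs⟩⟩
  rw [mem_thickening_iff_infDist_lt hne]
  calc infDist (Φ t x) A ≤ r t := hx t ht.le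
    _ < r 0 := hr ht
    _ = ρ := by simp only [r, neg_zero, Real.exp_zero]; ring

/-- **Compact attracting neighborhood mapped into its own interior.**  If `A`
is a compact asymptotically stable set for a continuous semiflow `Φ` on a
compact metric space `S`, then there exists a compact neighborhood `V` of `A`
with `Φ(t, V) ⊆ interior V` for every `t > 0`. -/
theorem exists_compact_attracting_nbhd {S : Type*} [MetricSpace S] [CompactSpace S]
    (Φ : ℝ → S → S)
    (hΦ_cont : ContinuousOn (fun p : ℝ × S => Φ p.1 p.2)
      (Set.Ici (0 : ℝ) ×ˢ (Set.univ : Set S)))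
    (hΦ_zero : ∀ x : S, Φ 0 x = x)
    (hΦ_semigroup : ∀ t s : ℝ, 0 ≤ t → 0 ≤ s → ∀ x : S,
      Φ (t + s) x = Φ t (Φ s x))
    (A : Set S) (hA : IsCompact A)
    -- (i) stability
    (hstab : ∀ U : Set S, IsOpen U → A ⊆ U →
      ∃ W : Set S, IsOpen W ∧ A ⊆ W ∧ ∀ x ∈ W, ∀ t : ℝ, 0 ≤ t → Φ t x ∈ U)
    -- (ii) local attractivity
    (hattr : ∃ W₀ : Set S, IsOpen W₀ ∧ A ⊆ W₀ ∧ ∀ x ∈ W₀,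
      Tendsto (fun t : ℝ => Metric.infDist (Φ t x) A) atTop (𝓝 0)) :
    ∃ V : Set S, IsCompact V ∧ A ⊆ interior V ∧
      ∀ t : ℝ, 0 < t → ∀ x ∈ V, Φ t x ∈ interior V :=
  exists_compact_attracting_nbhd_general Φ hΦ_cont hΦ_semigroup A hA hstab hattr
end

section
/- Let S be a compact metric space, Φ : [0,∞) × S → S a continuous semiflow, and A ⊆ S a compact asymptotically stable set for Φ with basin of attraction B(A) := {x ∈ S : dist(Φ(t,x), A) → 0 as t → ∞}. Then there exists a compact neighborhood V of A in S with V ⊆ B(A) and Φ(t,V) ⊆ interior(V) for all t > 0, such that V is a strong deformation retract of B(A): there is a continuous map H : [0,1] × B(A) → B(A) with H(0,x) = x for all x, H(1,x) ∈ V for all x, and H(s,x) = x for all s ∈ [0,1] and x ∈ V. -/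
/-!
Pass to the semiflow `ϕ : Flow ℝ≥0 S`. On the basin, the weighted orbit supremum
`L x = ⨆ t, (2 - exp (-t)) * infDist (ϕ t x) A` is a Lyapunov function: it dominates
`infDist · A`, vanishes on the invariant set `A`, is continuous because points near a point
of the basin are attracted uniformly after a fixed time, and strictly decreases along orbits
off `A`, since the supremum along `ϕ s x` is attained and the weight is strictly increasing.
For small `c`, `V = {infDist · A ≤ c, L ≤ c}` is then a compact neighbourhood of `A` that
`ϕ t` maps into its interior for `t > 0`. This makes the entry time `τ` into `V`
continuous on the basin (Ważewski's argument), and `H s x = ϕ (s τ(x)) x` retracts the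
basin onto `V`.
-/

open Set Filter Topology Metric NNReal

section iSup

variable {τ X : Type*} [TopologicalSpace τ] [LinearOrder τ] [OrderBot τ] [CompactIccSpace τ]
  [TopologicalSpace X]

theorem continuousAt_iSup_of_eventually_le {F : τ → X → ℝ} {x : X}
    (hF : Continuous (Function.uncurry F)) (hF₀ : ∀ t y, 0 ≤ F t y)
    (hbdd : ∀ y, BddAbove (range fun t => F t y))
    (htail : ∀ ε > 0, ∃ T, ∀ᶠ y in 𝓝 x, ∀ t, T ≤ t → F t y ≤ ε) :
    ContinuousAt (fun y => ⨆ t, F t y) x := by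
  refine Metric.tendsto_nhds.2 fun ε hε => ?_
  obtain ⟨T, hT⟩ := htail (ε / 2) (half_pos hε)
  have hclose : ∀ᶠ y in 𝓝 x, ∀ t ∈ Icc ⊥ T, dist (F t y) (F t x) < ε / 2 := by
    refine isCompact_Icc.eventually_forall_of_forall_eventually fun t _ => ?_
    have hc : Continuous fun z : X × τ => dist (F z.2 z.1) (F z.2 x) :=
      (hF.comp (continuous_snd.prodMk continuous_fst)).dist
        (hF.comp (continuous_snd.prodMk continuous_const))
    exact hc.continuousAt.eventually_lt continuousAt_const (by simpa using half_pos hε)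
  have hsup_le : ∀ y z, (∀ t, T ≤ t → F t y ≤ ε / 2) →
      (∀ t ∈ Icc ⊥ T, dist (F t y) (F t z) < ε / 2) →
      ⨆ t, F t y ≤ (⨆ t, F t z) + ε / 2 := by
    intro y z hy hyz
    refine ciSup_le fun t => ?_
    rcases le_total t T with htT | hTt
    · have := (abs_sub_lt_iff.1 (hyz t ⟨bot_le, htT⟩)).1
      linarith [le_ciSup (hbdd z) t]
    · linarith [hy t hTt, le_ciSup_of_le (hbdd z) ⊥ (hF₀ ⊥ z)]
  filter_upwards [hT, hclose] with y hyT hy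
  rw [Real.dist_eq, abs_sub_lt_iff]
  constructor
  · linarith [hsup_le y x hyT hy]
  · have hxy : ∀ t ∈ Icc ⊥ T, dist (F t x) (F t y) < ε / 2 := fun t ht =>
      (dist_comm (F t x) (F t y)).trans_lt (hy t ht)
    linarith [hsup_le x y hT.self_of_nhds hxy]

end iSup

namespace Flow

variable {S : Type*}

section Topological

variable [TopologicalSpace S]

def ofContinuousOnIci (Φ : ℝ → S → S)
    (hcont : ContinuousOn (fun p : ℝ × S => Φ p.1 p.2) (Ici 0 ×ˢ univ))
    (hzero : ∀ x, Φ 0 x = x)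
    (hadd : ∀ t s : ℝ, 0 ≤ t → 0 ≤ s → ∀ x, Φ (t + s) x = Φ t (Φ s x)) :
    Flow ℝ≥0 S where
  toFun t x := Φ t x
  cont' := hcont.comp_continuous (continuous_subtype_val.prodMap continuous_id)
    fun p => ⟨p.1.2, trivial⟩
  map_add' t s x := by simpa using hadd t s t.2 s.2 x
  map_zero' := hzero

variable (ϕ : Flow ℝ≥0 S) (A : Set S)

def IsLyapunovStable : Prop :=
  ∀ U, IsOpen U → A ⊆ U → ∃ W, IsOpen W ∧ A ⊆ W ∧ ∀ x ∈ W, ∀ t, ϕ t x ∈ U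

/-- Junk value `0` (`sInf ∅`) for orbits that never meet `V`. -/
noncomputable def entryTime (V : Set S) (x : S) : ℝ≥0 := sInf {t | ϕ t x ∈ V}

variable {ϕ A} {V : Set S} {x : S}

theorem IsLyapunovStable.isInvariant [T1Space S] (h : IsLyapunovStable ϕ A) :
    IsInvariant ϕ A := by
  intro t a ha
  by_contra hta
  obtain ⟨W, -, hAW, hW⟩ := h {ϕ t a}ᶜ isOpen_compl_singleton
    fun b hb (hba : b = ϕ t a) => hta (hba ▸ hb)
  exact hW a (hAW ha) t rfl

theorem flow_entryTime_mem (hV : IsClosed V) (hx : ∃ t, ϕ t x ∈ V) :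
    ϕ (entryTime ϕ V x) x ∈ V :=
  (hV.preimage (ϕ.continuous continuous_id continuous_const)).csInf_mem hx (OrderBot.bddBelow _)

theorem entryTime_eq_zero_of_mem (hx : x ∈ V) : entryTime ϕ V x = 0 :=
  nonpos_iff_eq_zero.1 <| csInf_le (OrderBot.bddBelow _) (by simpa [ϕ.map_zero_apply] using hx)

theorem continuousAt_entryTime (hV : IsClosed V)
    (htrap : ∀ t, 0 < t → MapsTo (ϕ t) V (interior V)) (hx : ∃ t, ϕ t x ∈ V) :
    ContinuousAt (entryTime ϕ V) x := by
  have hafter : ∀ t, entryTime ϕ V x < t → ∀ᶠ y in 𝓝 x, ϕ t y ∈ V := by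
    intro t ht
    have hint : ϕ t x ∈ interior V := by
      rw [← tsub_add_cancel_of_le ht.le, map_add]
      exact htrap _ (tsub_pos_of_lt ht) (flow_entryTime_mem hV hx)
    exact mem_of_superset ((ϕ.continuous_toFun t).continuousAt.preimage_mem_nhds
      (isOpen_interior.mem_nhds hint)) (preimage_mono interior_subset)
  refine tendsto_order.2 ⟨fun a ha => ?_, fun b hb => ?_⟩
  · have hbefore : ∀ᶠ y in 𝓝 x, ∀ t ∈ Icc 0 a, ϕ t y ∉ V := by
      refine isCompact_Icc.eventually_forall_of_forall_eventually fun t ht => ?_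
      have hcont : Continuous fun z : S × ℝ≥0 => ϕ z.2 z.1 :=
        ϕ.continuous continuous_snd continuous_fst
      have hout : ϕ t x ∉ V :=
        notMem_of_lt_csInf (s := {t | ϕ t x ∈ V}) (ht.2.trans_lt ha) (OrderBot.bddBelow _)
      exact hcont.continuousAt.preimage_mem_nhds (x := (x, t)) (hV.isOpen_compl.mem_nhds hout)
    obtain ⟨b, hb⟩ := exists_gt (entryTime ϕ V x)
    filter_upwards [hbefore, hafter b hb] with y hy hyb
    by_contra! hle
    exact hy _ ⟨bot_le, hle⟩ (flow_entryTime_mem hV ⟨b, hyb⟩)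
  · obtain ⟨m, hτm, hmb⟩ := exists_between hb
    filter_upwards [hafter m hτm] with y hy
    exact (csInf_le (s := {t | ϕ t y ∈ V}) (OrderBot.bddBelow _) hy).trans_lt hmb

theorem exists_strong_deformation_retraction (hV : IsClosed V)
    (htrap : ∀ t, 0 < t → MapsTo (ϕ t) V (interior V)) {B : Set S} (hB : IsInvariant ϕ B)
    (hhit : ∀ x ∈ B, ∃ t, ϕ t x ∈ V) :
    ∃ H : ℝ → S → S,
      ContinuousOn (fun p : ℝ × S => H p.1 p.2) (Icc 0 1 ×ˢ B) ∧
      (∀ s ∈ Icc (0 : ℝ) 1, ∀ x ∈ B, H s x ∈ B) ∧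
      (∀ x ∈ B, H 0 x = x) ∧
      (∀ x ∈ B, H 1 x ∈ V) ∧
      (∀ s ∈ Icc (0 : ℝ) 1, ∀ x ∈ V, H s x = x) := by
  refine ⟨fun s x => ϕ (s.toNNReal * entryTime ϕ V x) x, fun p hp => ?_,
    fun s _ x hx => hB _ hx, fun x _ => by simp [ϕ.map_zero_apply],
    fun x hx => by simpa using flow_entryTime_mem hV (hhit x hx),
    fun s _ x hx => by simp [entryTime_eq_zero_of_mem hx, ϕ.map_zero_apply]⟩
  have htime : ContinuousAt (fun p : ℝ × S => (p.1.toNNReal * entryTime ϕ V p.2, p.2)) p :=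
    ((continuous_real_toNNReal.comp continuous_fst).continuousAt.mul
      ((continuousAt_entryTime hV htrap (hhit _ hp.2)).comp continuous_snd.continuousAt)).prodMk
      continuous_snd.continuousAt
  exact (ϕ.cont'.continuousAt.comp htime).continuousWithinAt

end Topological

noncomputable def lyapunovWeight (t : ℝ≥0) : ℝ := 2 - Real.exp (-t)

theorem lyapunovWeight_zero : lyapunovWeight 0 = 1 := by
  norm_num [lyapunovWeight]

theorem one_le_lyapunovWeight (t : ℝ≥0) : 1 ≤ lyapunovWeight t := by
  have : Real.exp (-t) ≤ 1 := Real.exp_le_one_iff.2 (neg_nonpos.2 t.2)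
  unfold lyapunovWeight
  linarith

theorem lyapunovWeight_le_two (t : ℝ≥0) : lyapunovWeight t ≤ 2 := by
  have := Real.exp_pos (-t)
  unfold lyapunovWeight
  linarith

theorem strictMono_lyapunovWeight : StrictMono lyapunovWeight := fun s t hst => by
  have : Real.exp (-t) < Real.exp (-s) := Real.exp_lt_exp.2 (neg_lt_neg (NNReal.coe_lt_coe.2 hst))
  unfold lyapunovWeight
  linarith

theorem continuous_lyapunovWeight : Continuous lyapunovWeight := by
  unfold lyapunovWeight
  fun_prop

section Metric

variable [MetricSpace S] (ϕ : Flow ℝ≥0 S) (A : Set S)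

def basin : Set S := {x | Tendsto (fun t => infDist (ϕ t x) A) atTop (𝓝 0)}

noncomputable def lyapunov (x : S) : ℝ := ⨆ t, lyapunovWeight t * infDist (ϕ t x) A

variable {ϕ A} {x : S}

theorem flow_mem_basin_iff (t : ℝ≥0) : ϕ t x ∈ basin ϕ A ↔ x ∈ basin ϕ A := by
  simp only [basin, mem_ofPred_eq, ← map_add]
  constructor
  · intro h
    have hsub : Tendsto (· - t) atTop atTop :=
      tendsto_atTop_atTop.2 fun b => ⟨b + t, fun u hu => le_tsub_of_add_le_right hu⟩
    refine (h.comp hsub).congr' ?_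
    filter_upwards [eventually_ge_atTop t] with u hu
    simp [tsub_add_cancel_of_le hu]
  · exact fun h => h.comp (tendsto_atTop_mono (fun _ => le_add_right le_rfl) tendsto_id)

theorem basin_ofContinuousOnIci (Φ : ℝ → S → S)
    (hcont : ContinuousOn (fun p : ℝ × S => Φ p.1 p.2) (Ici 0 ×ˢ univ))
    (hzero : ∀ x, Φ 0 x = x)
    (hadd : ∀ t s : ℝ, 0 ≤ t → 0 ≤ s → ∀ x, Φ (t + s) x = Φ t (Φ s x)) :
    basin (ofContinuousOnIci Φ hcont hzero hadd) A =
      {x | Tendsto (fun t : ℝ => infDist (Φ t x) A) atTop (𝓝 0)} := by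
  ext x
  show _ ↔ Tendsto (fun t : ℝ => infDist (Φ t x) A) atTop (𝓝 0)
  rw [← NNReal.map_coe_atTop, tendsto_map'_iff]
  rfl

theorem isInvariant_basin : IsInvariant ϕ (basin ϕ A) :=
  fun t _ hx => (flow_mem_basin_iff t).2 hx

theorem IsLyapunovStable.subset_basin (h : IsLyapunovStable ϕ A) : A ⊆ basin ϕ A := fun _ ha =>
  tendsto_const_nhds.congr fun t => (infDist_zero_of_mem (h.isInvariant t ha)).symm

theorem IsLyapunovStable.exists_eventually_forall_mem (h : IsLyapunovStable ϕ A)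
    (hA : IsCompact A) (hne : A.Nonempty) (hx : x ∈ basin ϕ A) {U : Set S} (hU : IsOpen U)
    (hAU : A ⊆ U) : ∃ T, ∀ᶠ y in 𝓝 x, ∀ t, T ≤ t → ϕ t y ∈ U := by
  obtain ⟨W, hWo, hAW, hWU⟩ := h U hU hAU
  obtain ⟨r, hr, hrW⟩ := hA.exists_thickening_subset_open hWo hAW
  obtain ⟨T, hT⟩ := (hx.eventually (gt_mem_nhds hr)).exists
  have hTW : ϕ T x ∈ W := hrW ((mem_thickening_iff_infDist_lt hne).2 hT)
  refine ⟨T, ?_⟩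
  filter_upwards [(ϕ.continuous_toFun T).continuousAt.preimage_mem_nhds (hWo.mem_nhds hTW)]
    with y hy t ht
  rw [← tsub_add_cancel_of_le ht, map_add]
  exact hWU _ hy _

theorem IsLyapunovStable.isOpen_basin (h : IsLyapunovStable ϕ A) (hA : IsCompact A)
    (hne : A.Nonempty) (hattr : basin ϕ A ∈ 𝓝ˢ A) : IsOpen (basin ϕ A) := by
  obtain ⟨W, hWo, hAW, hWB⟩ := mem_nhdsSet_iff_exists.1 hattr
  refine isOpen_iff_mem_nhds.2 fun x hx => ?_
  obtain ⟨T, hT⟩ := h.exists_eventually_forall_mem hA hne hx hWo hAW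
  filter_upwards [hT] with y hy
  exact (flow_mem_basin_iff T).1 (hWB (hy T le_rfl))

section Lyapunov

theorem lyapunov_eq_zero_of_mem (hinv : IsInvariant ϕ A) {a : S} (ha : a ∈ A) :
    lyapunov ϕ A a = 0 := by
  simp [lyapunov, infDist_zero_of_mem (hinv _ ha)]

theorem exists_lyapunov_flow_le (hx : x ∈ basin ϕ A) {c : ℝ} (hc : 0 < c) :
    ∃ T, lyapunov ϕ A (ϕ T x) ≤ c := by
  obtain ⟨T, hT⟩ := eventually_atTop.1 (hx.eventually (ge_mem_nhds (half_pos hc)))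
  refine ⟨T, ciSup_le fun t => ?_⟩
  rw [← map_add]
  calc lyapunovWeight t * infDist (ϕ (t + T) x) A ≤ 2 * (c / 2) :=
        mul_le_mul (lyapunovWeight_le_two t) (hT _ le_add_self) infDist_nonneg zero_le_two
    _ = c := by ring

variable [CompactSpace S]

theorem bddAbove_range_lyapunov (x : S) :
    BddAbove (range fun t => lyapunovWeight t * infDist (ϕ t x) A) := by
  obtain ⟨M, hM⟩ := (isCompact_range (continuous_infDist_pt A)).bddAbove
  refine ⟨2 * M, forall_mem_range.2 fun t => ?_⟩
  exact mul_le_mul (lyapunovWeight_le_two t) (hM (mem_range_self _)) infDist_nonneg zero_le_two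

theorem infDist_le_lyapunov (x : S) : infDist x A ≤ lyapunov ϕ A x :=
  le_ciSup_of_le (bddAbove_range_lyapunov x) 0 (by simp [lyapunovWeight_zero, ϕ.map_zero_apply])

theorem IsLyapunovStable.continuousAt_lyapunov (h : IsLyapunovStable ϕ A) (hA : IsCompact A)
    (hne : A.Nonempty) (hx : x ∈ basin ϕ A) : ContinuousAt (lyapunov ϕ A) x := by
  refine continuousAt_iSup_of_eventually_le (F := fun t y => lyapunovWeight t * infDist (ϕ t y) A)
    ((continuous_lyapunovWeight.comp continuous_fst).mul ((continuous_infDist_pt A).comp ϕ.cont'))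
    (fun t _ => mul_nonneg (zero_le_one.trans (one_le_lyapunovWeight t)) infDist_nonneg)
    bddAbove_range_lyapunov fun ε hε => ?_
  obtain ⟨T, hT⟩ := h.exists_eventually_forall_mem hA hne hx isOpen_thickening
    (self_subset_thickening (half_pos hε) A)
  refine ⟨T, hT.mono fun y hy t ht => ?_⟩
  calc lyapunovWeight t * infDist (ϕ t y) A ≤ 2 * (ε / 2) :=
        mul_le_mul (lyapunovWeight_le_two t) ((mem_thickening_iff_infDist_lt hne).1 (hy t ht)).le
          infDist_nonneg zero_le_two
    _ = ε := by ring

theorem lyapunov_flow_lt (hA : IsClosed A) (hne : A.Nonempty) (hx : x ∈ basin ϕ A)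
    (hxA : x ∉ A) {s : ℝ≥0} (hs : 0 < s) : lyapunov ϕ A (ϕ s x) < lyapunov ϕ A x := by
  set g : ℝ≥0 → ℝ := fun t => lyapunovWeight t * infDist (ϕ t (ϕ s x)) A
  show ⨆ t, g t < lyapunov ϕ A x
  by_cases hpos : ∃ t₀, 0 < g t₀
  · obtain ⟨t₀, ht₀⟩ := hpos
    have hg : Continuous g := continuous_lyapunovWeight.mul
      ((continuous_infDist_pt A).comp (ϕ.continuous continuous_id continuous_const))
    have hlim : Tendsto g atTop (𝓝 0) := by
      refine squeeze_zero (fun t => mul_nonneg (zero_le_one.trans (one_le_lyapunovWeight t))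
        infDist_nonneg) (fun t => mul_le_mul_of_nonneg_right (lyapunovWeight_le_two t)
        infDist_nonneg) ?_
      simpa using ((flow_mem_basin_iff s).2 hx).const_mul 2
    obtain ⟨t₁, ht₁⟩ := hg.exists_forall_ge' t₀
      (by rw [cocompact_eq_atTop]; exact hlim.eventually (ge_mem_nhds ht₀))
    have hd : 0 < infDist (ϕ t₁ (ϕ s x)) A :=
      pos_of_mul_pos_right (ht₀.trans_le (ht₁ t₀))
        (zero_le_one.trans (one_le_lyapunovWeight t₁))
    calc ⨆ t, g t ≤ g t₁ := ciSup_le ht₁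
      _ < lyapunovWeight (t₁ + s) * infDist (ϕ (t₁ + s) x) A := by
        rw [map_add]
        exact mul_lt_mul_of_pos_right (strictMono_lyapunovWeight (lt_add_of_pos_right _ hs)) hd
      _ ≤ lyapunov ϕ A x := le_ciSup (bddAbove_range_lyapunov x) (t₁ + s)
  · push Not at hpos
    calc ⨆ t, g t ≤ 0 := ciSup_le hpos
      _ < infDist x A := (hA.notMem_iff_infDist_pos hne).1 hxA
      _ ≤ lyapunov ϕ A x := infDist_le_lyapunov x

theorem IsLyapunovStable.exists_trapping_nbhd (h : IsLyapunovStable ϕ A) (hA : IsCompact A)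
    (hne : A.Nonempty) (hattr : basin ϕ A ∈ 𝓝ˢ A) :
    ∃ V, IsCompact V ∧ A ⊆ interior V ∧ V ⊆ basin ϕ A ∧
      (∀ t, 0 < t → MapsTo (ϕ t) V (interior V)) ∧
      ∀ x ∈ basin ϕ A, ∃ t, ϕ t x ∈ V := by
  have hB := h.isOpen_basin hA hne hattr
  have hL : ContinuousOn (lyapunov ϕ A) (basin ϕ A) := fun x hx =>
    (h.continuousAt_lyapunov hA hne hx).continuousWithinAt
  obtain ⟨δ, hδ, hδB⟩ := hA.exists_thickening_subset_open hB h.subset_basin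
  set K := {x | infDist x A ≤ δ / 2}
  have hKB : K ⊆ basin ϕ A := fun x hx =>
    hδB ((mem_thickening_iff_infDist_lt hne).2 (hx.trans_lt (half_lt_self hδ)))
  set V := K ∩ lyapunov ϕ A ⁻¹' Iic (δ / 2)
  set O := basin ϕ A ∩ lyapunov ϕ A ⁻¹' Iio (δ / 2)
  have hOV : O ⊆ interior V := by
    refine interior_maximal (fun x hx => ?_) (hL.isOpen_inter_preimage hB isOpen_Iio)
    have hxL : lyapunov ϕ A x < δ / 2 := hx.2
    exact ⟨(infDist_le_lyapunov x).trans hxL.le, hxL.le⟩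
  have hAO : A ⊆ O := fun a ha =>
    ⟨h.subset_basin ha, by simp [lyapunov_eq_zero_of_mem h.isInvariant ha, hδ]⟩
  refine ⟨V, ((hL.mono hKB).preimage_isClosed_of_isClosed
    (isClosed_le (continuous_infDist_pt A) continuous_const) isClosed_Iic).isCompact,
    hAO.trans hOV, fun x hx => hKB hx.1, fun t ht x hx => hOV ?_, fun x hx => ?_⟩
  · by_cases hxA : x ∈ A
    · exact hAO (h.isInvariant t hxA)
    · exact ⟨(flow_mem_basin_iff t).2 (hKB hx.1),
        (lyapunov_flow_lt hA.isClosed hne (hKB hx.1) hxA ht).trans_le hx.2⟩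
  · obtain ⟨T, hT⟩ := exists_lyapunov_flow_le hx (half_pos hδ)
    exact ⟨T, (infDist_le_lyapunov _).trans hT, hT⟩

end Lyapunov

end Metric

end Flow

/-- **A compact attracting neighborhood is a strong deformation retract of the
basin of attraction.**  If `A` is a compact asymptotically stable set for a
continuous semiflow `Φ` on a compact metric space `S`, with basin of
attraction `B(A)`, then there is a compact neighborhood `V` of `A` with
`V ⊆ B(A)` and `Φ(t,V) ⊆ interior V` for all `t > 0`, such that `V` is a
strong deformation retract of `B(A)`. -/
theorem attracting_nbhd_strong_deformation_retract_of_basin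
    {S : Type*} [MetricSpace S] [CompactSpace S]
    (Φ : ℝ → S → S)
    (hΦ_cont : ContinuousOn (fun p : ℝ × S => Φ p.1 p.2)
      (Set.Ici (0 : ℝ) ×ˢ (Set.univ : Set S)))
    (hΦ_zero : ∀ x : S, Φ 0 x = x)
    (hΦ_semigroup : ∀ t s : ℝ, 0 ≤ t → 0 ≤ s → ∀ x : S,
      Φ (t + s) x = Φ t (Φ s x))
    (A : Set S) (hA : IsCompact A)
    -- (i) stability
    (hstab : ∀ U : Set S, IsOpen U → A ⊆ U →
      ∃ W : Set S, IsOpen W ∧ A ⊆ W ∧ ∀ x ∈ W, ∀ t : ℝ, 0 ≤ t → Φ t x ∈ U)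
    -- (ii) local attractivity
    (hattr : ∃ W₀ : Set S, IsOpen W₀ ∧ A ⊆ W₀ ∧ ∀ x ∈ W₀,
      Tendsto (fun t : ℝ => Metric.infDist (Φ t x) A) atTop (𝓝 0))
    -- the basin of attraction of `A`
    (B : Set S)
    (hB : B = {x : S | Tendsto (fun t : ℝ => Metric.infDist (Φ t x) A)
      atTop (𝓝 0)}) :
    ∃ V : Set S, IsCompact V ∧ A ⊆ interior V ∧ V ⊆ B ∧
      (∀ t : ℝ, 0 < t → ∀ x ∈ V, Φ t x ∈ interior V) ∧
      ∃ H : ℝ → S → S,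
        ContinuousOn (fun p : ℝ × S => H p.1 p.2) (Set.Icc (0 : ℝ) 1 ×ˢ B) ∧
        (∀ s ∈ Set.Icc (0 : ℝ) 1, ∀ x ∈ B, H s x ∈ B) ∧
        (∀ x ∈ B, H 0 x = x) ∧
        (∀ x ∈ B, H 1 x ∈ V) ∧
        (∀ s ∈ Set.Icc (0 : ℝ) 1, ∀ x ∈ V, H s x = x) := by
  rcases A.eq_empty_or_nonempty with rfl | hne
  · -- `infDist x ∅ = 0`, so the basin of `∅` is all of `S`
    obtain rfl : B = univ := by simp [hB]
    exact ⟨univ, isCompact_univ, by simp, subset_rfl, by simp, fun _ x => x,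
      continuous_snd.continuousOn, by simp, by simp, by simp, by simp⟩
  set ϕ := Flow.ofContinuousOnIci Φ hΦ_cont hΦ_zero hΦ_semigroup
  have hBϕ : B = Flow.basin ϕ A := by rw [hB, Flow.basin_ofContinuousOnIci]
  have hstable : Flow.IsLyapunovStable ϕ A := fun U hU hAU =>
    let ⟨W, hW, hAW, hWU⟩ := hstab U hU hAU
    ⟨W, hW, hAW, fun x hx t => hWU x hx t t.2⟩
  obtain ⟨W₀, hW₀, hAW₀, hW₀B⟩ := hattr
  have hW₀B' : W₀ ⊆ Flow.basin ϕ A := by rw [← hBϕ, hB]; exact hW₀B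
  have hattrϕ : Flow.basin ϕ A ∈ 𝓝ˢ A :=
    mem_nhdsSet_iff_exists.2 ⟨W₀, hW₀, hAW₀, hW₀B'⟩
  obtain ⟨V, hVc, hAV, hVB, htrap, hhit⟩ := hstable.exists_trapping_nbhd hA hne hattrϕ
  subst hBϕ
  exact ⟨V, hVc, hAV, hVB, fun t ht x hx => htrap ⟨t, ht.le⟩ ht hx,
    Flow.exists_strong_deformation_retraction hVc.isClosed htrap Flow.isInvariant_basin hhit⟩
end
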